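/- arXiv:1001.0125 — 7 statements merged into one kernel-verified Lean document; each statement's English description precedes it below -/
import Mathlib

section
/- Let ℓ be strictly positive edge lengths on G and p the minimum ℓ-distance between distinct terminals. Every ℓ-geodesic P (a T-path with ℓ(P) = p) contains at most one central node, i.e. at most one node v with π(v) = p/2, where π(v) is the ℓ-distance from v to the nearest terminal. -/
open SimpleGraph


open SimpleGraph

/-- A `T`-path: its endpoints are distinct terminals and all internal nodes
are non-terminals. -/
def IsTPath {V : Type} (G : SimpleGraph V) (T : Set V) {s t : V}
    (P : G.Walk s t) : Prop :=
  s ∈ T ∧ t ∈ T ∧ s ≠ t ∧ P.IsPath ∧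
    ∀ v ∈ P.support, v ≠ s → v ≠ t → v ∉ T

/-- The `ℓ`-length of a walk: the sum of the lengths of its edges. -/
noncomputable def walkLen {V : Type} (ell : V → V → ℚ) {G : SimpleGraph V}
    {u v : V} (P : G.Walk u v) : ℚ :=
  (P.darts.map fun d => ell d.toProd.1 d.toProd.2).sum

/-- `d` is the shortest-path distance function of `G` with respect to the
edge lengths `ell`. -/
def IsDistFun {V : Type} (G : SimpleGraph V) (ell : V → V → ℚ)
    (d : V → V → ℚ) : Prop :=
  ∀ u v : V, IsLeast {x : ℚ | ∃ P : G.Walk u v, walkLen ell P = x} (d u v)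

section aux
variable {V : Type} {G : SimpleGraph V} (ell : V → V → ℚ)

lemma walkLen_nonneg (hpos : ∀ u v, G.Adj u v → 0 < ell u v)
    {u v : V} (P : G.Walk u v) : 0 ≤ walkLen ell P := by
  apply List.sum_nonneg
  intro x hx
  simp only [List.mem_map] at hx
  obtain ⟨dd, _, rfl⟩ := hx
  exact (hpos _ _ dd.adj).le

lemma walkLen_pos (hpos : ∀ u v, G.Adj u v → 0 < ell u v)
    {u v : V} (h : u ≠ v) (P : G.Walk u v) : 0 < walkLen ell P := by
  cases P with
  | nil => exact absurd rfl h
  | cons hadj q =>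
    rename_i w
    have : walkLen ell (Walk.cons hadj q) = ell u w + walkLen ell q := by
      simp [walkLen]
    rw [this]
    have := walkLen_nonneg ell hpos q
    have := hpos _ _ hadj
    linarith

lemma walkLen_append {u v w : V} (P : G.Walk u v) (Q : G.Walk v w) :
    walkLen ell (P.append Q) = walkLen ell P + walkLen ell Q := by
  simp [walkLen, Walk.darts_append]

lemma walkLen_reverse (hsym : ∀ u v, ell u v = ell v u)
    {u v : V} (P : G.Walk u v) :
    walkLen ell P.reverse = walkLen ell P := by
  unfold walkLen
  rw [Walk.darts_reverse, List.map_reverse, List.sum_reverse, List.map_map]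
  congr 1
  apply List.map_congr_left
  intro dd _
  simp [Dart.symm, hsym]
end aux

/-- every `ℓ`-geodesic (a `T`-path of minimum length `p`) contains
at most one central node, i.e. at most one node `v` with `π(v) = p/2`. -/
theorem geodesic_has_at_most_one_central_node
    {V : Type} [Fintype V] (G : SimpleGraph V) (T : Set V)
    (ell : V → V → ℚ) (hpos : ∀ u v, G.Adj u v → 0 < ell u v)
    (hsym : ∀ u v, ell u v = ell v u)
    (d : V → V → ℚ) (hd : IsDistFun G ell d)
    (p : ℚ)
    (hp : IsLeast {x : ℚ | ∃ (s t : V) (P : G.Walk s t),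
      IsTPath G T P ∧ walkLen ell P = x} p)
    (pi : V → ℚ) (hpi : ∀ v, IsLeast {x : ℚ | ∃ t ∈ T, d v t = x} (pi v))
    {s t : V} (P : G.Walk s t) (hP : IsTPath G T P)
    (hgeo : walkLen ell P = p) :
    ∀ u ∈ P.support, ∀ v ∈ P.support, pi u = p/2 → pi v = p/2 → u = v := by
  classical
  obtain ⟨hsT, htT, hst, hpath, hint⟩ := hP
  have hdle : ∀ (a b : V) (Q : G.Walk a b), d a b ≤ walkLen ell Q :=
    fun a b Q => (hd a b).2 ⟨Q, rfl⟩
  have hpile : ∀ (a b : V), b ∈ T → pi a ≤ d a b :=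
    fun a b hb => (hpi a).2 ⟨b, hb, rfl⟩
  intro u hu v hv hu2 hv2
  have key : ∀ w (hw : w ∈ P.support), pi w = p/2 →
      walkLen ell (P.takeUntil w hw) = p/2 ∧
        walkLen ell (P.dropUntil w hw) = p/2 := by
    intro w hw hpiw
    have hsplit : walkLen ell (P.takeUntil w hw) +
        walkLen ell (P.dropUntil w hw) = p := by
      rw [← hgeo]
      conv_rhs => rw [← P.take_spec hw]
      rw [walkLen_append]
    have h1 : p/2 ≤ walkLen ell (P.takeUntil w hw) := by
      calc p/2 = pi w := hpiw.symm
        _ ≤ d w s := hpile w s hsT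
        _ ≤ walkLen ell (P.takeUntil w hw).reverse := hdle _ _ _
        _ = walkLen ell (P.takeUntil w hw) := walkLen_reverse ell hsym _
    have h2 : p/2 ≤ walkLen ell (P.dropUntil w hw) :=
      le_trans (le_trans hpiw.symm.le (hpile w t htT)) (hdle _ _ _)
    constructor <;> linarith
  obtain ⟨hau, hbu⟩ := key u hu hu2
  by_contra hne
  have hv' := hv
  rw [← P.take_spec hu, Walk.mem_support_append_iff] at hv'
  rcases hv' with h | h
  · have hsplit : walkLen ell ((P.takeUntil u hu).takeUntil v h) +
        walkLen ell ((P.takeUntil u hu).dropUntil v h) = p/2 := by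
      rw [← hau]
      conv_rhs => rw [← (P.takeUntil u hu).take_spec h]
      rw [walkLen_append]
    have h1 : p/2 ≤ walkLen ell ((P.takeUntil u hu).takeUntil v h) := by
      calc p/2 = pi v := hv2.symm
        _ ≤ d v s := hpile v s hsT
        _ ≤ walkLen ell ((P.takeUntil u hu).takeUntil v h).reverse := hdle _ _ _
        _ = _ := walkLen_reverse ell hsym _
    have h2 : 0 < walkLen ell ((P.takeUntil u hu).dropUntil v h) :=
      walkLen_pos ell hpos (fun e => hne e.symm) _
    linarith
  · have hsplit : walkLen ell ((P.dropUntil u hu).takeUntil v h) +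
        walkLen ell ((P.dropUntil u hu).dropUntil v h) = p/2 := by
      rw [← hbu]
      conv_rhs => rw [← (P.dropUntil u hu).take_spec h]
      rw [walkLen_append]
    have h1 : p/2 ≤ walkLen ell ((P.dropUntil u hu).dropUntil v h) :=
      le_trans (le_trans hv2.symm.le (hpile v t htT)) (hdle _ _ _)
    have h2 : 0 < walkLen ell ((P.dropUntil u hu).takeUntil v h) :=
      walkLen_pos ell hpos hne _
    linarith
end

section
/- In an expensive auxiliary bidirected graph H, where every gadget loop e_w has capacity 1 and every gadget leg e_{w,s} has capacity 1, every feasible integer bidirected q-flow f is good: for each gadget, f(e_{w,s}) ≤ f(e_w) holds for all s ∈ T. -/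
/-- A bidirected graph on node type `N`: each edge has two endpoints `endA`,
`endB` and, at each endpoint, a direction (`outA e = true` means the edge
leaves its first endpoint, similarly `outB`).  An edge with `endA e = endB e`
is a loop. -/
structure BDGraph (N : Type) where
  E : Type
  fintypeE : Fintype E
  endA : E → N
  endB : E → N
  outA : E → Bool
  outB : E → Bool

attribute [instance] BDGraph.fintypeE

namespace BDGraph

variable {N : Type} (Γ : BDGraph N)

open Classical in
/-- Divergence of an edge function `f` at a node `v`: total flow leaving `v`
minus total flow entering `v`; a loop at `v` is counted twice. -/
noncomputable def div (f : Γ.E → ℚ) (v : N) : ℚ :=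
  (∑ e, if Γ.endA e = v then (if Γ.outA e then f e else -f e) else 0)
  + (∑ e, if Γ.endB e = v then (if Γ.outB e then f e else -f e) else 0)

/-- A bidirected `q`-flow: nonnegative with zero divergence at every node
other than the source `q`.  Its value is `Γ.div f q`. -/
def IsBDFlow (q : N) (f : Γ.E → ℚ) : Prop :=
  (∀ e, 0 ≤ f e) ∧ ∀ v, v ≠ q → Γ.div f v = 0

/-- Feasibility of a flow with respect to integer capacities `c`. -/
def FlowFeasible (c : Γ.E → ℕ) (f : Γ.E → ℚ) : Prop :=
  ∀ e, f e ≤ (c e : ℚ)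

/-- Integrality of an edge function. -/
def IsIntegral (f : Γ.E → ℚ) : Prop := ∀ e, ∃ z : ℤ, f e = (z : ℚ)

open Classical in
/-- The flip at a node set `X`: the directions of all edge-ends at nodes of
`X` are reversed. -/
noncomputable def flip (X : Set N) : BDGraph N where
  E := Γ.E
  fintypeE := Γ.fintypeE
  endA := Γ.endA
  endB := Γ.endB
  outA := fun e => if Γ.endA e ∈ X then !Γ.outA e else Γ.outA e
  outB := fun e => if Γ.endB e ∈ X then !Γ.outB e else Γ.outB e

open Classical in
/-- `c[A⃗,B]` : total capacity of the edges leaving `A` whose other endpoint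
lies in `B` (for disjoint `A`, `B`). -/
noncomputable def capOutTo (c : Γ.E → ℕ) (A B : Set N) : ℕ :=
  ∑ e, ((if Γ.endA e ∈ A ∧ Γ.endB e ∈ B ∧ Γ.outA e then c e else 0)
    + (if Γ.endB e ∈ A ∧ Γ.endA e ∈ B ∧ Γ.outB e then c e else 0))

open Classical in
/-- `c[A,B]` : total capacity of the edges with one endpoint in `A` and the
other in `B` (for disjoint `A`, `B`), irrespective of directions. -/
noncomputable def capBetween (c : Γ.E → ℕ) (A B : Set N) : ℕ :=
  ∑ e, if (Γ.endA e ∈ A ∧ Γ.endB e ∈ B) ∨ (Γ.endA e ∈ B ∧ Γ.endB e ∈ A)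
    then c e else 0

open Classical in
/-- `c[A⃗,A⃖⃗]` : total capacity of the edges leaving `A` at both endpoints
(including twice-leaving loops). -/
noncomputable def capOutBoth (c : Γ.E → ℕ) (A : Set N) : ℕ :=
  ∑ e, if Γ.endA e ∈ A ∧ Γ.endB e ∈ A ∧ Γ.outA e ∧ Γ.outB e then c e else 0

/-- `c[A⃗]` : total capacity of the edges leaving `A` into the complement. -/
noncomputable def capOut (c : Γ.E → ℕ) (A : Set N) : ℕ :=
  Γ.capOutTo c A Aᶜ

/-- A step of a bidirected walk: an edge together with the direction of
traversal (`fwd = true`: from `endA` to `endB`). -/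
structure Step where
  e : Γ.E
  fwd : Bool

variable {Γ}

/-- The node at which a step starts. -/
def Step.src (s : Γ.Step) : N := if s.fwd then Γ.endA s.e else Γ.endB s.e

/-- The node at which a step ends. -/
def Step.dst (s : Γ.Step) : N := if s.fwd then Γ.endB s.e else Γ.endA s.e

/-- Whether the edge of the step leaves the start node of the step. -/
def Step.outSrc (s : Γ.Step) : Bool := if s.fwd then Γ.outA s.e else Γ.outB s.e

/-- Whether the edge of the step leaves the end node of the step. -/
def Step.outDst (s : Γ.Step) : Bool := if s.fwd then Γ.outB s.e else Γ.outA s.e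

variable (Γ)

/-- A (nontrivial) bidirected walk from `u` to `v`, given by its list of
steps: consecutive steps share a node at which they form a transit pair
(one edge enters the node, the other leaves it). -/
def IsBDWalk (u v : N) (L : List Γ.Step) : Prop :=
  L ≠ [] ∧ (∀ s ∈ L.head?, s.src = u) ∧ (∀ s ∈ L.getLast?, s.dst = v) ∧
    L.Chain' fun s t => s.dst = t.src ∧ s.outDst ≠ t.outSrc

/-- A closed `q`–`q` walk that leaves `q` twice (at its start and its end). -/
def IsClosedQWalk (q : N) (L : List Γ.Step) : Prop :=
  Γ.IsBDWalk q q L ∧ (∀ s ∈ L.head?, s.outSrc = true) ∧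
    ∀ s ∈ L.getLast?, s.outDst = true

open Classical in
/-- The residual bidirected graph of a flow `g` with capacities `c`: it keeps
every unsaturated edge and adds the reverse of every edge carrying flow. -/
noncomputable def residual (c : Γ.E → ℕ) (g : Γ.E → ℚ) : BDGraph N where
  E := {e : Γ.E // g e < (c e : ℚ)} ⊕ {e : Γ.E // 0 < g e}
  fintypeE := by classical infer_instance
  endA := Sum.elim (fun e => Γ.endA e.1) fun e => Γ.endA e.1
  endB := Sum.elim (fun e => Γ.endB e.1) fun e => Γ.endB e.1
  outA := Sum.elim (fun e => Γ.outA e.1) fun e => !Γ.outA e.1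
  outB := Sum.elim (fun e => Γ.outB e.1) fun e => !Γ.outB e.1

/-- The residual capacities on the residual graph. -/
noncomputable def resCap (c : Γ.E → ℕ) (g : Γ.E → ℚ) :
    (Γ.residual c g).E → ℚ :=
  Sum.elim (fun e => (c e.1 : ℚ) - g e.1) fun e => g e.1

end BDGraph

/-- in the expensive auxiliary bidirected graph (where every
gadget loop and every gadget leg has capacity `1`), every feasible integer
bidirected `q`-flow is good: at each gadget with center `θ w`, loop `loopE w`
(leaving `θ w` twice) and legs `legE w s` (entering `θ w`),
`Σ_s f(e_{w,s}) = 2·f(e_w)` and `f(e_{w,s}) ≤ f(e_w)` for every `s ∈ T`. -/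
theorem expensive_integer_flow_is_good
    {N W T : Type} [Fintype T] (Γ : BDGraph N) (q : N) (c : Γ.E → ℕ)
    (θ : W → N) (loopE : W → Γ.E) (legE : W → T → Γ.E)
    (hinj : Function.Injective
      (Sum.elim loopE (fun p : W × T => legE p.1 p.2)))
    (hθq : ∀ w, θ w ≠ q)
    (hloop : ∀ w, Γ.endA (loopE w) = θ w ∧ Γ.endB (loopE w) = θ w ∧
      Γ.outA (loopE w) = true ∧ Γ.outB (loopE w) = true)
    (hleg : ∀ w s, Γ.endB (legE w s) = θ w ∧ Γ.outB (legE w s) = false ∧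
      Γ.endA (legE w s) ≠ θ w)
    (hincident : ∀ w e, Γ.endA e = θ w ∨ Γ.endB e = θ w →
      e = loopE w ∨ ∃ s, e = legE w s)
    (hcloop : ∀ w, c (loopE w) = 1) (hcleg : ∀ w s, c (legE w s) = 1)
    (f : Γ.E → ℚ) (hflow : Γ.IsBDFlow q f) (hfeas : Γ.FlowFeasible c f)
    (hint : Γ.IsIntegral f) :
    ∀ w : W, (∑ s : T, f (legE w s)) = 2 * f (loopE w) ∧
      ∀ s : T, f (legE w s) ≤ f (loopE w) := by
  classical
  intro w
  obtain ⟨hA, hB, hoA, hoB⟩ := hloop w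
  have hlegB : ∀ s, Γ.endB (legE w s) = θ w := fun s => (hleg w s).1
  have hlegO : ∀ s, Γ.outB (legE w s) = false := fun s => (hleg w s).2.1
  have hlegA : ∀ s, Γ.endA (legE w s) ≠ θ w := fun s => (hleg w s).2.2
  have hne : ∀ s, legE w s ≠ loopE w := by
    intro s h
    exact hlegA s (by rw [h]; exact hA)
  have hleginj : Function.Injective (legE w) := by
    intro s t h
    have := hinj (a₁ := Sum.inr (w, s)) (a₂ := Sum.inr (w, t)) h
    simpa using this
  have hdiv := hflow.2 (θ w) (hθq w)
  unfold BDGraph.div at hdiv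
  have h1 : (∑ e, if Γ.endA e = θ w then (if Γ.outA e then f e else -f e) else 0)
      = f (loopE w) := by
    rw [Fintype.sum_eq_single (loopE w)]
    · simp [hA, hoA]
    · intro e he
      by_cases hc : Γ.endA e = θ w
      · rcases hincident w e (Or.inl hc) with h | ⟨s, h⟩
        · exact absurd h he
        · subst h; exact absurd hc (hlegA s)
      · simp [hc]
  set S : Finset Γ.E := insert (loopE w) (Finset.image (legE w) Finset.univ) with hS
  have h2 : (∑ e, if Γ.endB e = θ w then (if Γ.outB e then f e else -f e) else 0)
      = f (loopE w) - ∑ s : T, f (legE w s) := by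
    rw [← Finset.sum_subset (Finset.subset_univ S)]
    · rw [hS, Finset.sum_insert (by
        simp only [Finset.mem_image, Finset.mem_univ, true_and]
        rintro ⟨s, hs⟩; exact hne s hs)]
      rw [Finset.sum_image (fun s _ t _ h => hleginj h)]
      have : ∀ s : T, (if Γ.endB (legE w s) = θ w then
          (if Γ.outB (legE w s) then f (legE w s) else -f (legE w s)) else 0)
          = -f (legE w s) := by
        intro s; simp [hlegB s, hlegO s]
      rw [Finset.sum_congr rfl (fun s _ => this s)]
      simp [hB, hoB, sub_eq_add_neg, Finset.sum_neg_distrib]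
    · intro e _ heS
      by_cases hc : Γ.endB e = θ w
      · rcases hincident w e (Or.inr hc) with h | ⟨s, h⟩
        · exact absurd (h ▸ Finset.mem_insert_self _ _) heS
        · exact absurd (h ▸ Finset.mem_insert_of_mem
            (Finset.mem_image_of_mem _ (Finset.mem_univ s))) heS
      · simp [hc]
  rw [h1, h2] at hdiv
  have hsum : (∑ s : T, f (legE w s)) = 2 * f (loopE w) := by linarith
  refine ⟨hsum, ?_⟩
  obtain ⟨z, hz⟩ := hint (loopE w)
  have h0 : (0 : ℚ) ≤ z := hz ▸ hflow.1 (loopE w)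
  have h1' : (z : ℚ) ≤ 1 := by
    have := hfeas (loopE w); rw [hcloop w, hz] at this; simpa using this
  have hz01 : z = 0 ∨ z = 1 := by
    have h0' : (0 : ℤ) ≤ z := by exact_mod_cast h0
    have h1'' : z ≤ 1 := by exact_mod_cast h1'
    omega
  intro s
  rcases hz01 with h | h
  · have hloop0 : f (loopE w) = 0 := by rw [hz, h]; norm_num
    have hall : ∀ t ∈ (Finset.univ : Finset T), f (legE w t) = 0 := by
      rw [← Finset.sum_eq_zero_iff_of_nonneg (fun t _ => hflow.1 (legE w t))]
      rw [hsum, hloop0]; ring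
    rw [hloop0, hall s (Finset.mem_univ s)]
  · have := hfeas (legE w s)
    rw [hcleg w s] at this
    rw [hz, h]
    simpa using this
end

section
/- An integer bidirected q-flow g in a capacitated bidirected graph Γ is maximum if and only if the residual bidirected graph Γ_g contains no residual closed q–q walk leaving q twice that traverses each residual edge e at most c_g(e) times. -/
namespace BDGraph

variable {N : Type} (Γ : BDGraph N)

variable {Γ}

variable (Γ)

open Classical

def sgn (b : Bool) : ℚ := if b then 1 else -1

lemma sgn_not (b : Bool) : sgn (!b) = -sgn b := by
  cases b <;> simp [sgn]

lemma sgn_mul_self (b : Bool) : sgn b * sgn b = 1 := by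
  cases b <;> norm_num [sgn]

lemma natCast_toNat (z : ℤ) : (z.toNat : ℚ) = max (z : ℚ) 0 := by
  exact_mod_cast Int.toNat_eq_max z

lemma sum_dite_zero {α M : Type*} [Fintype α] [AddCommMonoid M] (p : α → Prop) [DecidablePred p]
    [Fintype (Subtype p)] (F : ∀ a, p a → M) :
    ∑ a, (if h : p a then F a h else 0) = ∑ a : Subtype p, F a a.2 := by
  rw [Finset.sum_dite, Finset.sum_const_zero, add_zero]
  exact Fintype.sum_equiv (Equiv.subtypeEquivRight (by simp)) _ _ fun _ => rfl

noncomputable def incidence (e : Γ.E) (v : N) : ℚ :=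
  (if Γ.endA e = v then sgn (Γ.outA e) else 0) + (if Γ.endB e = v then sgn (Γ.outB e) else 0)

variable {Γ}

lemma div_eq_sum_mul_incidence (f : Γ.E → ℚ) (v : N) :
    Γ.div f v = ∑ e, f e * Γ.incidence e v := by
  simp only [div, incidence, mul_add, ← Finset.sum_add_distrib]
  refine Finset.sum_congr rfl fun e _ => ?_
  congr 1 <;> split_ifs <;> simp_all [sgn]

lemma div_add (f f' : Γ.E → ℚ) (v : N) :
    Γ.div (fun e => f e + f' e) v = Γ.div f v + Γ.div f' v := by
  simp only [div_eq_sum_mul_incidence, add_mul, Finset.sum_add_distrib]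

lemma div_sub (f f' : Γ.E → ℚ) (v : N) :
    Γ.div (fun e => f e - f' e) v = Γ.div f v - Γ.div f' v := by
  simp only [div_eq_sum_mul_incidence, sub_mul, Finset.sum_sub_distrib]

lemma div_count_eq_sum_incidence (M : List Γ.E) (v : N) :
    Γ.div (fun e => (M.count e : ℚ)) v = (M.map fun e => Γ.incidence e v).sum := by
  rw [div_eq_sum_mul_incidence, Finset.sum_list_map_count]
  simp only [nsmul_eq_mul]
  refine (Finset.sum_subset (Finset.subset_univ _) fun e _ he => ?_).symm
  rw [List.count_eq_zero_of_not_mem (mt List.mem_toFinset.2 he), Nat.cast_zero, zero_mul]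

lemma incidence_step (s : Γ.Step) (v : N) :
    Γ.incidence s.e v =
      (if s.src = v then sgn s.outSrc else 0) + (if s.dst = v then sgn s.outDst else 0) := by
  rcases s with ⟨e, _ | _⟩ <;>
    simp [incidence, Step.src, Step.dst, Step.outSrc, Step.outDst, add_comm]

lemma sum_incidence_of_isChain {s : Γ.Step} {L : List Γ.Step}
    (h : (s :: L).IsChain fun s t => s.dst = t.src ∧ s.outDst ≠ t.outSrc) (v : N) :
    ((s :: L).map fun t => Γ.incidence t.e v).sum =
      (if s.src = v then sgn s.outSrc else 0) +
        (if ((s :: L).getLast (List.cons_ne_nil s L)).dst = v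
          then sgn ((s :: L).getLast (List.cons_ne_nil s L)).outDst else 0) := by
  induction L generalizing s with
  | nil => simp [incidence_step]; rfl
  | cons t L ih =>
    obtain ⟨⟨hdst, hout⟩, ht⟩ := List.isChain_cons_cons.mp h
    have htransit : (if s.dst = v then sgn s.outDst else 0) +
        (if t.src = v then sgn t.outSrc else 0) = 0 := by
      rw [← hdst, Bool.eq_not_iff.mpr hout.symm, sgn_not]
      split_ifs <;> ring
    rw [List.map_cons, List.sum_cons, ih ht, incidence_step, List.getLast_cons_cons]
    linear_combination htransit

lemma IsClosedQWalk.sum_incidence {q : N} {L : List Γ.Step} (hL : Γ.IsClosedQWalk q L)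
    (v : N) : (L.map fun t => Γ.incidence t.e v).sum = if q = v then 2 else 0 := by
  obtain ⟨⟨hne, hsrc, hdst, hchain⟩, hout_src, hout_dst⟩ := hL
  obtain ⟨s, L, rfl⟩ := List.exists_cons_of_ne_nil hne
  have hlast := List.getLast?_eq_some_getLast (List.cons_ne_nil s L)
  rw [sum_incidence_of_isChain hchain, hsrc s rfl, hout_src s rfl, hdst _ hlast,
    hout_dst _ hlast]
  split_ifs <;> norm_num [sgn]

lemma IsClosedQWalk.div_count {q : N} {L : List Γ.Step}
    (hL : Γ.IsClosedQWalk q L) (v : N) :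
    Γ.div (fun e => ((L.map Step.e).count e : ℚ)) v = if q = v then 2 else 0 := by
  rw [div_count_eq_sum_incidence, List.map_map]
  exact hL.sum_incidence v

lemma IsBDWalk.singleton (s : Γ.Step) : Γ.IsBDWalk s.src s.dst [s] :=
  ⟨List.cons_ne_nil s [], by simp, by simp, List.isChain_singleton s⟩

lemma IsBDWalk.cons {w : N} {s : Γ.Step} {L : List Γ.Step} (hL : Γ.IsBDWalk s.dst w L)
    (hs : ∀ t ∈ L.head?, s.outDst ≠ t.outSrc) : Γ.IsBDWalk s.src w (s :: L) := by
  obtain ⟨hne, hsrc, hdst, hchain⟩ := hL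
  obtain ⟨t, L, rfl⟩ := List.exists_cons_of_ne_nil hne
  refine ⟨List.cons_ne_nil s _, by simp, ?_, List.isChain_cons.mpr ⟨?_, hchain⟩⟩
  · simpa [List.getLast?_cons_cons] using hdst
  · exact fun t' ht' => ⟨(hsrc t' ht').symm, hs t' ht'⟩

lemma exists_step_of_pos {m : Γ.E → ℕ} {u : N} {b : Bool}
    (h : 0 < sgn b * Γ.div (fun e => (m e : ℚ)) u) :
    ∃ s : Γ.Step, 0 < m s.e ∧ s.src = u ∧ s.outSrc = b := by
  by_contra! hno
  refine h.not_ge ?_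
  rw [div_eq_sum_mul_incidence, Finset.mul_sum]
  refine Finset.sum_nonpos fun e _ => ?_
  rcases (m e).eq_zero_or_pos with h0 | hpos
  · simp [h0]
  have hA := hno ⟨e, true⟩ hpos
  have hB := hno ⟨e, false⟩ hpos
  simp only [Step.src, Step.outSrc, if_true, Bool.false_eq_true, if_false] at hA hB
  rw [mul_left_comm]
  refine mul_nonpos_of_nonneg_of_nonpos (Nat.cast_nonneg _) ?_
  unfold incidence
  cases b <;> cases hoA : Γ.outA e <;> cases hoB : Γ.outB e <;> split_ifs <;> simp_all [sgn]

lemma div_update_pred {m : Γ.E → ℕ} {x : Γ.E} (hx : 0 < m x) (v : N) :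
    Γ.div (fun e => (Function.update m x (m x - 1) e : ℚ)) v =
      Γ.div (fun e => (m e : ℚ)) v - Γ.incidence x v := by
  have hm : ∀ e, (Function.update m x (m x - 1) e : ℚ) = m e - (Pi.single x 1 : Γ.E → ℚ) e := by
    intro e
    rcases eq_or_ne e x with rfl | he
    · simp [Nat.cast_sub hx]
    · simp [he]
  simp only [hm, div_eq_sum_mul_incidence, sub_mul, Finset.sum_sub_distrib,
    Pi.single_apply, ite_mul, one_mul, zero_mul, Finset.sum_ite_eq', Finset.mem_univ, if_true]

lemma count_cons_le_of_le_update {m : Γ.E → ℕ} {x : Γ.E} (hx : 0 < m x)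
    {M : List Γ.E} (hM : ∀ e, M.count e ≤ Function.update m x (m x - 1) e) (e : Γ.E) :
    (x :: M).count e ≤ m e := by
  have := hM e
  rcases eq_or_ne e x with rfl | he
  · rw [Function.update_self] at this
    rw [List.count_cons_self]
    omega
  · rw [Function.update_of_ne he] at this
    simpa [List.count_cons, he.symm] using this

/-- The divergence of `m` is that of a walk from `u` to `q` whose first edge leaves `u` iff `b`,
plus a surplus `K + 1 > 0` at `q`; following one available edge keeps this shape. -/
theorem exists_walk_of_div_eq {m : Γ.E → ℕ} {q u : N} {b : Bool} {K : ℚ}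
    (hK : -1 < K) (hub : u = q → b = true)
    (hdiv : ∀ v, Γ.div (fun e => (m e : ℚ)) v =
      (if v = q then K else 0) + (if u = v then sgn b else 0)) :
    ∃ L : List Γ.Step, Γ.IsBDWalk u q L ∧ (∀ s ∈ L.head?, s.outSrc = b) ∧
      (∀ s ∈ L.getLast?, s.outDst = true) ∧ ∀ e, (L.map Step.e).count e ≤ m e := by
  induction hn : ∑ e, m e using Nat.strong_induction_on generalizing m u b with
  | _ n ih =>
  have hpos : 0 < sgn b * Γ.div (fun e => (m e : ℚ)) u := by
    rw [hdiv]
    by_cases huq : u = q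
    · rw [if_pos huq, if_pos rfl, hub huq]
      simp only [sgn, if_true, one_mul]
      linarith
    · rw [if_neg huq, if_pos rfl, zero_add, sgn_mul_self]
      exact one_pos
  obtain ⟨s, hs, rfl, rfl⟩ := exists_step_of_pos hpos
  by_cases hstop : s.dst = q ∧ s.outDst = true
  · refine ⟨[s], hstop.1 ▸ IsBDWalk.singleton s, by simp, by simp [hstop.2], fun e => ?_⟩
    rcases eq_or_ne s.e e with rfl | he
    · simpa using Nat.one_le_iff_ne_zero.mpr hs.ne'
    · simp [he]
  have hsum : ∑ e, Function.update m s.e (m s.e - 1) e < n := by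
    rw [← hn, Finset.sum_update_of_mem (Finset.mem_univ _),
      ← Finset.add_sum_erase _ _ (Finset.mem_univ s.e), Finset.sdiff_singleton_eq_erase]
    omega
  have hdiv' : ∀ v, Γ.div (fun e => (Function.update m s.e (m s.e - 1) e : ℚ)) v =
      (if v = q then K else 0) + (if s.dst = v then sgn (!s.outDst) else 0) := by
    intro v
    rw [div_update_pred hs, hdiv, incidence_step, sgn_not]
    split_ifs <;> ring
  have hub' : s.dst = q → (!s.outDst) = true := by
    intro h
    simpa using fun hout => hstop ⟨h, hout⟩
  obtain ⟨L, hL, hhead, hlast, hcount⟩ := ih _ hsum hub' hdiv' rfl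
  refine ⟨s :: L, hL.cons fun t ht => ?_, by simp, ?_, count_cons_le_of_le_update hs hcount⟩
  · rw [hhead t ht]; cases s.outDst <;> simp
  · obtain ⟨t, L, rfl⟩ := List.exists_cons_of_ne_nil hL.1
    simpa [List.getLast?_cons_cons] using hlast

section Residual

variable (c : Γ.E → ℕ) (g : Γ.E → ℚ)

lemma sum_residual (F : (Γ.residual c g).E → ℚ) :
    ∑ x, F x =
      ∑ a : {e // g e < (c e : ℚ)}, F (Sum.inl a) + ∑ a : {e // 0 < g e}, F (Sum.inr a) := by
  rw [Subsingleton.elim (Γ.residual c g).fintypeE (instFintypeSum _ _)]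
  exact Fintype.sum_sum_type F

lemma incidence_residual_inl (a : {e // g e < (c e : ℚ)}) (v : N) :
    (Γ.residual c g).incidence (Sum.inl a) v = Γ.incidence a.1 v :=
  rfl

lemma incidence_residual_inr (a : {e // 0 < g e}) (v : N) :
    (Γ.residual c g).incidence (Sum.inr a) v = -Γ.incidence a.1 v := by
  simp only [incidence, residual, Sum.elim_inr, sgn_not]
  split_ifs <;> ring

noncomputable def netFlow (h : (Γ.residual c g).E → ℚ) (e : Γ.E) : ℚ :=
  (if he : g e < c e then h (Sum.inl ⟨e, he⟩) else 0) -
    (if he : 0 < g e then h (Sum.inr ⟨e, he⟩) else 0)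

lemma div_residual (h : (Γ.residual c g).E → ℚ) (v : N) :
    (Γ.residual c g).div h v = Γ.div (netFlow c g h) v := by
  rw [div_eq_sum_mul_incidence, div_eq_sum_mul_incidence, sum_residual]
  simp only [netFlow, sub_mul, dite_mul, zero_mul, Finset.sum_sub_distrib, sum_dite_zero,
    incidence_residual_inl, incidence_residual_inr, mul_neg, Finset.sum_neg_distrib]
  ring

lemma netFlow_bounds (hg : ∀ e, 0 ≤ g e) (hgc : Γ.FlowFeasible c g)
    {h : (Γ.residual c g).E → ℚ} (h0 : ∀ x, 0 ≤ h x) (hcap : ∀ x, h x ≤ Γ.resCap c g x)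
    (e : Γ.E) : 0 ≤ g e + netFlow c g h e ∧ g e + netFlow c g h e ≤ c e := by
  have hfwd := fun he => hcap (Sum.inl ⟨e, he⟩)
  have hbwd := fun he => hcap (Sum.inr ⟨e, he⟩)
  have hfwd0 := fun he => h0 (Sum.inl ⟨e, he⟩)
  have hbwd0 := fun he => h0 (Sum.inr ⟨e, he⟩)
  simp only [resCap, Sum.elim_inl, Sum.elim_inr] at hfwd hbwd
  unfold netFlow
  constructor <;> split_ifs with h1 h2 h2 <;> grind [hgc e, hg e]

lemma isIntegral_netFlow_natCast (m : (Γ.residual c g).E → ℕ) :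
    Γ.IsIntegral (netFlow c g fun x => (m x : ℚ)) := by
  intro e
  refine ⟨(if he : g e < c e then (m (Sum.inl ⟨e, he⟩) : ℤ) else 0) -
    (if he : 0 < g e then (m (Sum.inr ⟨e, he⟩) : ℤ) else 0), ?_⟩
  unfold netFlow
  split_ifs <;> simp

noncomputable def toResidual (d : Γ.E → ℤ) : (Γ.residual c g).E → ℕ :=
  Sum.elim (fun a => (d a.1).toNat) fun a => (-d a.1).toNat

variable {c g} {d : Γ.E → ℤ}

lemma netFlow_toResidual (hd : ∀ e, 0 ≤ g e + d e ∧ g e + d e ≤ c e) (e : Γ.E) :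
    netFlow c g (fun x => (toResidual c g d x : ℚ)) e = d e := by
  have := hd e
  unfold netFlow toResidual
  simp only [Sum.elim_inl, Sum.elim_inr, natCast_toNat, Int.cast_neg]
  split_ifs <;> grind

lemma toResidual_le_resCap (hd : ∀ e, 0 ≤ g e + d e ∧ g e + d e ≤ c e)
    (x : (Γ.residual c g).E) : (toResidual c g d x : ℚ) ≤ Γ.resCap c g x := by
  rcases x with ⟨e, he⟩ | ⟨e, he⟩ <;>
    simp only [toResidual, resCap, Sum.elim_inl, Sum.elim_inr, natCast_toNat, Int.cast_neg] <;>
    grind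

end Residual

variable {c : Γ.E → ℕ} {g : Γ.E → ℚ} {q : N}

theorem exists_flow_of_residual_walk (hflow : Γ.IsBDFlow q g) (hfeas : Γ.FlowFeasible c g)
    (hint : Γ.IsIntegral g) {L : List (Γ.residual c g).Step}
    (hL : (Γ.residual c g).IsClosedQWalk q L)
    (hcount : ∀ x, ((L.map Step.e).count x : ℚ) ≤ Γ.resCap c g x) :
    ∃ f, Γ.IsBDFlow q f ∧ Γ.FlowFeasible c f ∧ Γ.IsIntegral f ∧ Γ.div f q = Γ.div g q + 2 := by
  set h : (Γ.residual c g).E → ℕ := fun x => (L.map Step.e).count x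
  have hdiv : ∀ v, Γ.div (fun e => g e + netFlow c g (fun x => (h x : ℚ)) e) v =
      Γ.div g v + if q = v then 2 else 0 := fun v => by
    rw [div_add, ← div_residual, hL.div_count]
  have hbounds := netFlow_bounds c g hflow.1 hfeas (fun x => Nat.cast_nonneg (h x)) hcount
  refine ⟨_, ⟨fun e => (hbounds e).1, fun v hv => ?_⟩, fun e => (hbounds e).2, ?_, ?_⟩
  · rw [hdiv, hflow.2 v hv, if_neg (Ne.symm hv), add_zero]
  · intro e
    obtain ⟨a, ha⟩ := hint e
    obtain ⟨b, hb⟩ := isIntegral_netFlow_natCast c g h e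
    exact ⟨a + b, by rw [Int.cast_add, ← ha, ← hb]⟩
  · rw [hdiv, if_pos rfl]

theorem exists_residual_walk_of_lt (hflow : Γ.IsBDFlow q g) (hint : Γ.IsIntegral g)
    {f : Γ.E → ℚ} (hf : Γ.IsBDFlow q f) (hffeas : Γ.FlowFeasible c f) (hfint : Γ.IsIntegral f)
    (hlt : Γ.div g q < Γ.div f q) :
    ∃ L : List (Γ.residual c g).Step, (Γ.residual c g).IsClosedQWalk q L ∧
      ∀ x, ((L.map Step.e).count x : ℚ) ≤ Γ.resCap c g x := by
  choose zf hzf using hfint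
  choose zg hzg using hint
  set d := fun e => zf e - zg e
  have hfd : ∀ e, f e = g e + d e := fun e => by simp [d, hzf, hzg]
  have hd : ∀ e, 0 ≤ g e + d e ∧ g e + d e ≤ c e := fun e => hfd e ▸ ⟨hf.1 e, hffeas e⟩
  have hdiv : ∀ v, (Γ.residual c g).div (fun x => (toResidual c g d x : ℚ)) v =
      (if v = q then Γ.div f q - Γ.div g q - 1 else 0) + (if q = v then sgn true else 0) := by
    intro v
    have hnet : netFlow c g (fun x => (toResidual c g d x : ℚ)) = fun e => f e - g e := by
      ext e
      rw [netFlow_toResidual hd, hfd]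
      ring
    rw [div_residual, hnet, div_sub]
    by_cases hv : v = q
    · simp [hv, sgn]
    · simp [hv, Ne.symm hv, hf.2 v hv, hflow.2 v hv]
  obtain ⟨L, hwalk, hhead, hlast, hcount⟩ :=
    exists_walk_of_div_eq (by linarith) (fun _ => rfl) hdiv
  exact ⟨L, ⟨hwalk, hhead, hlast⟩, fun x =>
    (Nat.cast_le.mpr (hcount x)).trans (toResidual_le_resCap hd x)⟩

end BDGraph

open Classical in
theorem IBDFlow_maximum_iff_no_residual_walk_general
    {N : Type} (Γ : BDGraph N) (q : N)
    (c : Γ.E → ℕ) (g : Γ.E → ℚ)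
    (hflow : Γ.IsBDFlow q g) (hfeas : Γ.FlowFeasible c g)
    (hint : Γ.IsIntegral g) :
    (∀ f : Γ.E → ℚ, Γ.IsBDFlow q f → Γ.FlowFeasible c f → Γ.IsIntegral f →
        Γ.div f q ≤ Γ.div g q) ↔
      ¬ ∃ L : List (Γ.residual c g).Step,
        (Γ.residual c g).IsClosedQWalk q L ∧
        ∀ e : (Γ.residual c g).E,
          ((L.map BDGraph.Step.e).count e : ℚ) ≤ Γ.resCap c g e := by
  constructor
  · rintro hmax ⟨L, hL, hcount⟩
    obtain ⟨f, hf, hffeas, hfint, hval⟩ :=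
      BDGraph.exists_flow_of_residual_walk hflow hfeas hint hL hcount
    linarith [hmax f hf hffeas hfint]
  · intro hno f hf hffeas hfint
    by_contra! hlt
    exact hno (BDGraph.exists_residual_walk_of_lt hflow hint hf hffeas hfint hlt)

open Classical in
/-- an integer bidirected `q`-flow `g` is maximum if and only if
the residual bidirected graph contains no closed `q`–`q` walk leaving `q`
twice that traverses each residual edge `e` at most `c_g(e)` times. -/
theorem IBDFlow_maximum_iff_no_residual_walk
    {N : Type} (Γ : BDGraph N) (q : N)
    (hq : ∀ e, (Γ.endA e = q → Γ.outA e = true) ∧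
      (Γ.endB e = q → Γ.outB e = true))
    (c : Γ.E → ℕ) (g : Γ.E → ℚ)
    (hflow : Γ.IsBDFlow q g) (hfeas : Γ.FlowFeasible c g)
    (hint : Γ.IsIntegral g) :
    (∀ f : Γ.E → ℚ, Γ.IsBDFlow q f → Γ.FlowFeasible c f → Γ.IsIntegral f →
        Γ.div f q ≤ Γ.div g q) ↔
      ¬ ∃ L : List (Γ.residual c g).Step,
        (Γ.residual c g).IsClosedQWalk q L ∧
        ∀ e : (Γ.residual c g).E,
          ((L.map BDGraph.Step.e).count e : ℚ) ≤ Γ.resCap c g e :=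
  IBDFlow_maximum_iff_no_residual_walk_general Γ q c g hflow hfeas hint
end

section
/- Let f be a maximum integer skew-symmetric flow in a skew-symmetric graph G with symmetric capacities c and source s. Then the set R_f of nodes reachable from s by c_f-regular paths in the residual graph G_f is the same for all maximum integer skew-symmetric flows f. -/
/-- A skew-symmetric graph: a digraph with a fixed-point-free involution
`sigV` on nodes and an involution `sigA` on arcs mapping an arc from `u` to
`v` to an arc from `sigV v` to `sigV u`. -/
structure SkewGraph (N : Type) where
  A : Type
  fintypeA : Fintype A
  tail : A → N
  head : A → N
  sigV : N → N
  sigA : A → A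
  sigV_invol : Function.Involutive sigV
  sigV_ne : ∀ v, sigV v ≠ v
  sigA_invol : Function.Involutive sigA
  tail_sigA : ∀ a, tail (sigA a) = sigV (head a)
  head_sigA : ∀ a, head (sigA a) = sigV (tail a)

attribute [instance] SkewGraph.fintypeA

namespace SkewGraph

variable {N : Type} (G : SkewGraph N)

open Classical in
/-- Divergence of `f` at `v`: outgoing minus incoming flow. -/
noncomputable def div (f : G.A → ℚ) (v : N) : ℚ :=
  (∑ a, if G.tail a = v then f a else 0)
    - ∑ a, if G.head a = v then f a else 0

/-- An integer skew-symmetric `s`–`s'` flow: a nonnegative, integral,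
self-symmetric function with zero divergence away from `s` and `s' = σ(s)`
and nonnegative divergence at `s`; its value is `G.div f s`. -/
def IsISKFlow (s : N) (f : G.A → ℚ) : Prop :=
  (∀ a, 0 ≤ f a) ∧ (∀ a, ∃ z : ℤ, f a = (z : ℚ)) ∧
    (∀ a, f (G.sigA a) = f a) ∧
    (∀ v, v ≠ s → v ≠ G.sigV s → G.div f v = 0) ∧ 0 ≤ G.div f s

/-- Feasibility with respect to arc capacities. -/
def FlowFeasible (c : G.A → ℕ) (f : G.A → ℚ) : Prop :=
  ∀ a, f a ≤ (c a : ℚ)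

open Classical in
/-- `c(X,Y)` : total capacity of the arcs from `X` to `Y`. -/
noncomputable def capFromTo (c : G.A → ℕ) (X Y : Set N) : ℕ :=
  ∑ a, if G.tail a ∈ X ∧ G.head a ∈ Y then c a else 0

/-- `c[X⃗]` : total capacity of the arcs leaving `X`. -/
noncomputable def capOut (c : G.A → ℕ) (X : Set N) : ℕ :=
  G.capFromTo c X Xᶜ

/-- A directed walk from `u` to `v`, given by its nonempty arc list. -/
def IsDiWalk (u v : N) (L : List G.A) : Prop :=
  L ≠ [] ∧ (∀ a ∈ L.head?, G.tail a = u) ∧ (∀ a ∈ L.getLast?, G.head a = v) ∧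
    L.Chain' fun a b => G.head a = G.tail b

open Classical in
/-- The residual skew-symmetric graph of a symmetric flow `f` with symmetric
capacities `c`: unsaturated arcs are kept and reversals of flow-carrying
arcs are added; the skew-symmetry is inherited. -/
noncomputable def residual (c : G.A → ℕ) (f : G.A → ℚ)
    (hc : ∀ a, c (G.sigA a) = c a) (hf : ∀ a, f (G.sigA a) = f a) :
    SkewGraph N where
  A := {a : G.A // f a < (c a : ℚ)} ⊕ {a : G.A // 0 < f a}
  fintypeA := by classical infer_instance
  tail := Sum.elim (fun a => G.tail a.1) fun a => G.head a.1
  head := Sum.elim (fun a => G.head a.1) fun a => G.tail a.1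
  sigV := G.sigV
  sigA := Sum.elim
    (fun a => Sum.inl ⟨G.sigA a.1, by rw [hf, hc]; exact a.2⟩)
    fun a => Sum.inr ⟨G.sigA a.1, by rw [hf]; exact a.2⟩
  sigV_invol := G.sigV_invol
  sigV_ne := G.sigV_ne
  sigA_invol := by
    rintro (a | a) <;> simp [G.sigA_invol a.1]
  tail_sigA := by
    rintro (a | a) <;> simp [G.tail_sigA, G.head_sigA]
  head_sigA := by
    rintro (a | a) <;> simp [G.tail_sigA, G.head_sigA]

/-- Residual capacities on the residual graph. -/
noncomputable def resCap (c : G.A → ℕ) (f : G.A → ℚ)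
    (hc : ∀ a, c (G.sigA a) = c a) (hf : ∀ a, f (G.sigA a) = f a) :
    (G.residual c f hc hf).A → ℚ :=
  Sum.elim (fun a => (c a.1 : ℚ) - f a.1) fun a => f a.1

/-- A `c_f`-regular path in the residual graph: an arc-simple `u`–`v` walk
such that every pair of mutually symmetric arcs occurring on it has residual
capacity at least `2` (and equal on both mates). -/
def IsRegularPath (c : G.A → ℕ) (f : G.A → ℚ)
    (hc : ∀ a, c (G.sigA a) = c a) (hf : ∀ a, f (G.sigA a) = f a)
    (u v : N) (L : List (G.residual c f hc hf).A) : Prop :=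
  (G.residual c f hc hf).IsDiWalk u v L ∧ L.Nodup ∧
    ∀ a ∈ L, (G.residual c f hc hf).sigA a ∈ L →
      G.resCap c f hc hf a = G.resCap c f hc hf ((G.residual c f hc hf).sigA a)
        ∧ 2 ≤ G.resCap c f hc hf a

end SkewGraph

/-- The set `R_f` of nodes reachable from the source `s` by `c_f`-regular
paths in the residual graph `G_f` (together with `s` itself). -/
def SkewGraph.reachSet {N : Type} (G : SkewGraph N) (s : N) (c : G.A → ℕ)
    (hc : ∀ a, c (G.sigA a) = c a) (f : G.A → ℚ)
    (hf : ∀ a, f (G.sigA a) = f a) : Set N :=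
  {v : N | v = s ∨ ∃ L, G.IsRegularPath c f hc hf s v L}

/-!
If `v` is reached from `s` by a `c_f`-regular path `P`, pushing one unit along `P` and along its
mirror `σ(P)` turns `f` into an integral, symmetric, capacity-respecting `f'` whose divergence is
that of `f` plus `δ_s - δ_v + δ_{σv} - δ_{σs}`. Maximum flows have the same value, hence (by
conservation and skew-symmetry) the same divergence everywhere, so `f' - g`, written as a
nonnegative function on the arcs of `G_g`, is symmetric, bounded by `c_g`, and has exactly this
divergence. Peeling off from `s` one arc together with its mate at a time, such a function contains
either an arc-simple `s`–`v` path whose mate pairs fit under it, i.e. a `c_g`-regular path, or a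
symmetric unit `s`–`σs` flow, which would augment `g`. Hence `R_f ⊆ R_g`, and equality by symmetry.
-/

theorem Fintype.sum_subtype_eq_sum_dite {α M : Type*} [Fintype α] [AddCommMonoid M]
    {p : α → Prop} [DecidablePred p] [Fintype (Subtype p)] (F : Subtype p → M) :
    ∑ x, F x = ∑ a, if h : p a then F ⟨a, h⟩ else 0 := by
  rw [Finset.sum_dite, Finset.sum_const_zero, add_zero]
  exact Fintype.sum_equiv (Equiv.subtypeEquivRight (by simp)) _ _ fun _ => rfl

theorem Rat.natCast_floor_eq_max {q : ℚ} (hq : ∃ z : ℤ, q = z) : (⌊q⌋₊ : ℚ) = max q 0 := by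
  obtain ⟨z, rfl⟩ := hq
  rw [← Int.floor_toNat, Int.floor_intCast]
  exact_mod_cast Int.toNat_eq_max z

namespace SkewGraph

open Classical

variable {N : Type}

noncomputable def pathDiv (u v y : N) : ℚ :=
  (if u = y then 1 else 0) - (if v = y then 1 else 0)

theorem pathDiv_add_pathDiv (u v w y : N) : pathDiv u v y + pathDiv v w y = pathDiv u w y := by
  unfold pathDiv; ring

theorem pathDiv_swap (u v y : N) : pathDiv v u y = -pathDiv u v y := by
  unfold pathDiv; ring

variable (G : SkewGraph N)

theorem sigV_eq_iff {u v : N} : G.sigV u = v ↔ u = G.sigV v :=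
  ⟨fun h => h ▸ (G.sigV_invol u).symm, fun h => h ▸ G.sigV_invol v⟩

theorem pathDiv_sigV (u v y : N) : pathDiv u v (G.sigV y) = pathDiv (G.sigV u) (G.sigV v) y := by
  simp only [pathDiv, G.sigV_eq_iff]

theorem div_eq_sum (F : G.A → ℚ) (y : N) :
    G.div F y = ∑ a, F a * pathDiv (G.tail a) (G.head a) y := by
  simp only [div, pathDiv, mul_sub, mul_ite, mul_one, mul_zero, Finset.sum_sub_distrib]

theorem div_add (F F' : G.A → ℚ) (y : N) :
    G.div (fun a => F a + F' a) y = G.div F y + G.div F' y := by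
  simp only [div_eq_sum, add_mul, Finset.sum_add_distrib]

theorem div_sub (F F' : G.A → ℚ) (y : N) :
    G.div (fun a => F a - F' a) y = G.div F y - G.div F' y := by
  simp only [div_eq_sum, sub_mul, Finset.sum_sub_distrib]

theorem div_indicator_singleton (b : G.A) (y : N) :
    G.div (fun a => if a = b then 1 else 0) y = pathDiv (G.tail b) (G.head b) y := by
  simp [div_eq_sum]

theorem div_comp_sigA (F : G.A → ℚ) (y : N) :
    G.div (fun a => F (G.sigA a)) y = -G.div F (G.sigV y) := by
  rw [div_eq_sum, div_eq_sum, ← Finset.sum_neg_distrib,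
    ← G.sigA_invol.bijective.sum_comp (fun a => F (G.sigA a) * _)]
  refine Finset.sum_congr rfl fun a _ => ?_
  rw [G.sigA_invol a, G.tail_sigA, G.head_sigA, pathDiv_sigV, pathDiv_swap, mul_neg]

theorem div_sigV_of_sigA_invariant {F : G.A → ℚ} (hF : ∀ a, F (G.sigA a) = F a) (y : N) :
    G.div F (G.sigV y) = -G.div F y := by
  have h := G.div_comp_sigA F y
  simp only [hF] at h
  linarith

set_option linter.deprecated false in
theorem isDiWalk_cons_iff {u v : N} {a : G.A} {L : List G.A} :
    G.IsDiWalk u v (a :: L) ↔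
      G.tail a = u ∧ (L = [] ∧ G.head a = v ∨ G.IsDiWalk (G.head a) v L) := by
  cases L with
  | nil => simp [IsDiWalk, List.Chain']
  | cons b L =>
    simp only [IsDiWalk, List.Chain', List.isChain_cons_cons, List.head?_cons,
      List.getLast?_cons_cons, Option.mem_def, Option.some.injEq, forall_eq']
    simp only [ne_eq, reduceCtorEq, not_false_eq_true, true_and, false_and, false_or]
    tauto

theorem IsDiWalk.cons {v : N} {a : G.A} {L : List G.A} (h : G.IsDiWalk (G.head a) v L) :
    G.IsDiWalk (G.tail a) v (a :: L) :=
  G.isDiWalk_cons_iff.2 ⟨rfl, Or.inr h⟩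

theorem isDiWalk_singleton (a : G.A) : G.IsDiWalk (G.tail a) (G.head a) [a] :=
  G.isDiWalk_cons_iff.2 ⟨rfl, Or.inl ⟨rfl, rfl⟩⟩

theorem IsDiWalk.suffix {u v : N} {a : G.A} {l₂ : List G.A} :
    ∀ {l₁ : List G.A}, G.IsDiWalk u v (l₁ ++ a :: l₂) → G.IsDiWalk (G.tail a) v (a :: l₂)
  | [], h => by
    obtain rfl := (G.isDiWalk_cons_iff.1 h).1
    exact h
  | b :: l₁, h => by
    rw [List.cons_append, G.isDiWalk_cons_iff] at h
    obtain ⟨-, ⟨hnil, -⟩ | h⟩ := h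
    · exact absurd hnil (by simp)
    · exact IsDiWalk.suffix h

theorem sum_map_pathDiv_of_isDiWalk (y : N) :
    ∀ {u v : N} {L : List G.A}, G.IsDiWalk u v L →
      (L.map fun a => pathDiv (G.tail a) (G.head a) y).sum = pathDiv u v y
  | _, _, [], h => absurd rfl h.1
  | u, v, a :: L, h => by
    obtain ⟨rfl, ⟨rfl, rfl⟩ | h⟩ := G.isDiWalk_cons_iff.1 h
    · simp
    · rw [List.map_cons, List.sum_cons, sum_map_pathDiv_of_isDiWalk y h, pathDiv_add_pathDiv]

theorem div_indicator_of_isDiWalk {u v : N} {L : List G.A} (hL : G.IsDiWalk u v L)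
    (hnd : L.Nodup) (y : N) :
    G.div (fun a => if a ∈ L then 1 else 0) y = pathDiv u v y := by
  rw [div_eq_sum, ← G.sum_map_pathDiv_of_isDiWalk y hL, ← List.sum_toFinset _ hnd]
  simp only [ite_mul, one_mul, zero_mul, ← Finset.sum_filter]
  congr 1
  ext a
  simp

noncomputable def symFlow (L : List G.A) (a : G.A) : ℕ :=
  (if a ∈ L then 1 else 0) + (if G.sigA a ∈ L then 1 else 0)

theorem symFlow_sigA (L : List G.A) (a : G.A) : G.symFlow L (G.sigA a) = G.symFlow L a := by
  rw [symFlow, symFlow, G.sigA_invol a, add_comm]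

theorem symFlow_mono {L L' : List G.A} (h : L ⊆ L') (a : G.A) :
    G.symFlow L a ≤ G.symFlow L' a := by
  unfold symFlow
  gcongr <;> split_ifs <;> simp_all [h _]

theorem symFlow_cons_le (b : G.A) (L : List G.A) (a : G.A) :
    G.symFlow (b :: L) a ≤ G.symFlow [b] a + G.symFlow L a := by
  unfold symFlow
  split_ifs <;> simp_all

theorem div_symFlow {u v : N} {L : List G.A} (hL : G.IsDiWalk u v L) (hnd : L.Nodup) (y : N) :
    G.div (fun a => (G.symFlow L a : ℚ)) y = pathDiv u v y + pathDiv (G.sigV v) (G.sigV u) y := by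
  simp only [symFlow, Nat.cast_add, Nat.cast_ite, Nat.cast_one, Nat.cast_zero]
  rw [G.div_add, G.div_comp_sigA (fun a => if a ∈ L then 1 else 0),
    G.div_indicator_of_isDiWalk hL hnd, G.div_indicator_of_isDiWalk hL hnd, pathDiv_sigV]
  simp only [pathDiv]
  ring

theorem exists_isDiWalk_cons {v : N} {b : G.A} {Q : List G.A}
    (hQ : G.IsDiWalk (G.head b) v Q) (hnd : Q.Nodup) :
    ∃ L, G.IsDiWalk (G.tail b) v L ∧ L.Nodup ∧
      ∀ a, G.symFlow L a ≤ G.symFlow [b] a + G.symFlow Q a := by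
  by_cases hb : b ∈ Q
  · obtain ⟨l₁, l₂, rfl⟩ := List.append_of_mem hb
    refine ⟨b :: l₂, hQ.suffix, hnd.sublist (List.sublist_append_right _ _), fun a => ?_⟩
    exact (G.symFlow_mono (List.subset_append_right _ _) a).trans (Nat.le_add_left _ _)
  · exact ⟨b :: Q, hQ.cons, List.nodup_cons.2 ⟨hb, hnd⟩, G.symFlow_cons_le b Q⟩

theorem exists_tail_eq_of_div_pos {h : G.A → ℕ} {p : N}
    (hp : 0 < G.div (fun a => (h a : ℚ)) p) : ∃ a, G.tail a = p ∧ 0 < h a := by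
  by_contra! hcon
  have hout : (∑ a, if G.tail a = p then (h a : ℚ) else 0) = 0 :=
    Finset.sum_eq_zero fun a _ => by
      split_ifs with ht
      · simp [Nat.le_zero.1 (hcon a ht)]
      · rfl
  have hin : 0 ≤ ∑ a, if G.head a = p then (h a : ℚ) else 0 :=
    Finset.sum_nonneg fun a _ => by positivity
  rw [div, hout] at hp
  linarith

theorem head_eq_sigV_tail_of_sigA_eq {b : G.A} (hb : G.sigA b = b) :
    G.head b = G.sigV (G.tail b) := by
  rw [← G.head_sigA, hb]

theorem exists_unitFlow_of_sigA_eq {h : G.A → ℕ} {b : G.A} (hself : G.sigA b = b)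
    (hb : 0 < h b) :
    ∃ H : G.A → ℕ, (∀ a, H a ≤ h a) ∧ (∀ a, H (G.sigA a) = H a) ∧
      ∀ y, G.div (fun a => (H a : ℚ)) y = pathDiv (G.tail b) (G.sigV (G.tail b)) y := by
  refine ⟨fun a => if a = b then 1 else 0, fun a => ?_, fun a => ?_, fun y => ?_⟩
  · dsimp only
    split_ifs with hab
    · exact hab ▸ hb
    · exact Nat.zero_le _
  · simp only [G.sigA_invol.injective.eq_iff' hself]
  · push_cast
    rw [G.div_indicator_singleton, G.head_eq_sigV_tail_of_sigA_eq hself]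

theorem symFlow_singleton_le {h : G.A → ℕ} (hsym : ∀ a, h (G.sigA a) = h a) {b : G.A}
    (hb : G.sigA b ≠ b) (hpos : 0 < h b) (a : G.A) : G.symFlow [b] a ≤ h a := by
  simp only [symFlow, List.mem_singleton]
  split_ifs with h₁ h₂ h₂
  · subst h₁; exact absurd h₂ hb
  · subst h₁; omega
  · rw [← hsym a, h₂]; omega
  · omega

theorem exists_walk_or_symmetric_subflow (h : G.A → ℕ) (hsym : ∀ a, h (G.sigA a) = h a)
    {p v : N} (hpv : p ≠ v)
    (hdiv : ∀ y, G.div (fun a => (h a : ℚ)) y = pathDiv p v y + pathDiv (G.sigV v) (G.sigV p) y) :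
    (∃ L, G.IsDiWalk p v L ∧ L.Nodup ∧ ∀ a, G.symFlow L a ≤ h a) ∨
      ∃ H : G.A → ℕ, (∀ a, H a ≤ h a) ∧ (∀ a, H (G.sigA a) = H a) ∧
        ∀ y, G.div (fun a => (H a : ℚ)) y = pathDiv p (G.sigV p) y := by
  obtain ⟨n, hn⟩ : ∃ n, ∑ a, h a = n := ⟨_, rfl⟩
  induction n using Nat.strong_induction_on generalizing h p with
  | _ n IH =>
  obtain ⟨b, rfl, hb⟩ : ∃ b, G.tail b = p ∧ 0 < h b := by
    refine G.exists_tail_eq_of_div_pos ?_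
    rw [hdiv]
    simp only [pathDiv, if_true, if_neg hpv.symm, if_neg (G.sigV_ne _), sub_zero]
    positivity
  by_cases hself : G.sigA b = b
  · exact Or.inr (G.exists_unitFlow_of_sigA_eq hself hb)
  set x := G.head b
  have he := G.symFlow_singleton_le hsym hself hb
  by_cases hxv : x = v
  · exact Or.inl ⟨[b], hxv ▸ G.isDiWalk_singleton b, List.nodup_singleton b, he⟩
  have hdive := G.div_symFlow (G.isDiWalk_singleton b) (List.nodup_singleton b)
  have hlt : ∑ a, (h a - G.symFlow [b] a) < n := by
    refine hn ▸ Finset.sum_lt_sum (fun a _ => Nat.sub_le _ _) ⟨b, Finset.mem_univ _, ?_⟩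
    have : 0 < G.symFlow [b] b := by simp [symFlow]
    omega
  have hdiv' (y : N) : G.div (fun a => ((h a - G.symFlow [b] a : ℕ) : ℚ)) y
      = pathDiv x v y + pathDiv (G.sigV v) (G.sigV x) y := by
    simp only [Nat.cast_sub (he _)]
    rw [G.div_sub, hdiv, hdive]
    simp only [pathDiv]
    ring
  rcases IH _ hlt _ (fun a => by rw [hsym, G.symFlow_sigA]) hxv hdiv' rfl with
    ⟨Q, hQ, hQnd, hQle⟩ | ⟨H, hHle, hHsym, hHdiv⟩
  · obtain ⟨L, hL, hLnd, hLle⟩ := G.exists_isDiWalk_cons hQ hQnd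
    exact Or.inl ⟨L, hL, hLnd, fun a => by have := hQle a; have := he a; have := hLle a; omega⟩
  · refine Or.inr ⟨fun a => H a + G.symFlow [b] a, fun a => ?_, fun a => ?_, fun y => ?_⟩
    · have := hHle a; have := he a; dsimp only; omega
    · dsimp only
      rw [hHsym, G.symFlow_sigA]
    · push_cast
      rw [G.div_add, hHdiv, hdive]
      simp only [pathDiv]
      ring

section Residual

variable (c : G.A → ℕ) (w : G.A → ℚ)
  (hc : ∀ a, c (G.sigA a) = c a) (hw : ∀ a, w (G.sigA a) = w a)

noncomputable def netOfResidual (A : (G.residual c w hc hw).A → ℕ) (b : G.A) : ℚ :=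
  (if hb : w b < c b then (A (.inl ⟨b, hb⟩) : ℚ) else 0) -
    (if hb : 0 < w b then (A (.inr ⟨b, hb⟩) : ℚ) else 0)

-- `⌊·⌋₊` is the positive part on the integers, which is all it is applied to.
noncomputable def residualOfDiff (w' : G.A → ℚ) : (G.residual c w hc hw).A → ℕ :=
  Sum.elim (fun b => ⌊w' b.1 - w b.1⌋₊) fun b => ⌊w b.1 - w' b.1⌋₊

variable {c w hc hw}

theorem sum_residual {M : Type*} [AddCommMonoid M] (F : (G.residual c w hc hw).A → M) :
    ∑ r, F r = ∑ b : {b // w b < c b}, F (.inl b) + ∑ b : {b // 0 < w b}, F (.inr b) := by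
  refine Eq.trans ?_ (Fintype.sum_sum_type (α₁ := {b // w b < c b}) (α₂ := {b // 0 < w b}) F)
  exact Fintype.sum_equiv (Equiv.refl _) _ _ fun _ => rfl

theorem div_netOfResidual (A : (G.residual c w hc hw).A → ℕ) (y : N) :
    G.div (G.netOfResidual c w hc hw A) y = (G.residual c w hc hw).div (fun r => (A r : ℚ)) y := by
  rw [div_eq_sum, div_eq_sum, sum_residual]
  simp only [Fintype.sum_subtype_eq_sum_dite, netOfResidual, sub_mul, dite_mul, zero_mul,
    Finset.sum_sub_distrib]
  rw [sub_eq_add_neg, ← Finset.sum_neg_distrib]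
  congr 1
  refine Finset.sum_congr rfl fun b _ => ?_
  split_ifs
  · simp only [residual, Sum.elim_inr, pathDiv_swap (G.head b), mul_neg, neg_neg]
  · exact neg_zero

theorem resCap_sigA (r : (G.residual c w hc hw).A) :
    G.resCap c w hc hw ((G.residual c w hc hw).sigA r) = G.resCap c w hc hw r := by
  rcases r with b | b
  · exact congrArg₂ (fun x y : ℚ => x - y) (by rw [hc]) (hw b.1)
  · exact hw b.1

theorem one_le_resCap (hint : ∀ b, ∃ z : ℤ, w b = z) (r : (G.residual c w hc hw).A) :
    1 ≤ G.resCap c w hc hw r := by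
  rcases r with ⟨b, hb⟩ | ⟨b, hb⟩ <;> obtain ⟨z, hz⟩ := hint b <;>
    simp only [resCap, Sum.elim_inl, Sum.elim_inr] <;> rw [hz] at hb ⊢
  · have : z + 1 ≤ (c b : ℤ) := by exact_mod_cast hb
    have : (z : ℚ) + 1 ≤ c b := by exact_mod_cast this
    linarith
  · have : 1 ≤ z := by exact_mod_cast hb
    exact_mod_cast this

theorem netOfResidual_sigA {A : (G.residual c w hc hw).A → ℕ}
    (hA : ∀ r, A ((G.residual c w hc hw).sigA r) = A r) (b : G.A) :
    G.netOfResidual c w hc hw A (G.sigA b) = G.netOfResidual c w hc hw A b := by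
  have hl (hb : w b < c b) : A (.inl ⟨G.sigA b, by rwa [hw, hc]⟩) = A (.inl ⟨b, hb⟩) :=
    hA (.inl ⟨b, hb⟩)
  have hr (hb : 0 < w b) : A (.inr ⟨G.sigA b, by rwa [hw]⟩) = A (.inr ⟨b, hb⟩) :=
    hA (.inr ⟨b, hb⟩)
  unfold netOfResidual
  simp only [hw, hc]
  split_ifs with h₁ h₂ h₂
  · rw [hl h₁, hr h₂]
  · rw [hl h₁]
  · rw [hr h₂]
  · rfl

theorem exists_int_netOfResidual (A : (G.residual c w hc hw).A → ℕ) (b : G.A) :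
    ∃ z : ℤ, G.netOfResidual c w hc hw A b = z := by
  unfold netOfResidual
  split_ifs with h₁ h₂ h₂
  · exact ⟨A (.inl ⟨b, h₁⟩) - A (.inr ⟨b, h₂⟩), by push_cast; rfl⟩
  · exact ⟨A (.inl ⟨b, h₁⟩), by simp⟩
  · exact ⟨-A (.inr ⟨b, h₂⟩), by simp⟩
  · exact ⟨0, by simp⟩

theorem add_netOfResidual_mem_Icc {A : (G.residual c w hc hw).A → ℕ}
    (hA : ∀ r, (A r : ℚ) ≤ G.resCap c w hc hw r) (hw0 : ∀ b, 0 ≤ w b) (hwc : ∀ b, w b ≤ c b)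
    (b : G.A) : w b + G.netOfResidual c w hc hw A b ∈ Set.Icc 0 (c b : ℚ) := by
  have := hw0 b
  have := hwc b
  unfold netOfResidual
  split_ifs with h₁ h₂ h₂
  · have : (A (.inl ⟨b, h₁⟩) : ℚ) ≤ c b - w b := hA _
    have : (A (.inr ⟨b, h₂⟩) : ℚ) ≤ w b := hA _
    constructor <;> linarith [(A (.inl ⟨b, h₁⟩)).cast_nonneg (α := ℚ),
      (A (.inr ⟨b, h₂⟩)).cast_nonneg (α := ℚ)]
  · have : (A (.inl ⟨b, h₁⟩) : ℚ) ≤ c b - w b := hA _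
    constructor <;> linarith [(A (.inl ⟨b, h₁⟩)).cast_nonneg (α := ℚ)]
  · have : (A (.inr ⟨b, h₂⟩) : ℚ) ≤ w b := hA _
    constructor <;> linarith [(A (.inr ⟨b, h₂⟩)).cast_nonneg (α := ℚ)]
  · constructor <;> linarith

theorem residualOfDiff_sigA {w' : G.A → ℚ} (hw' : ∀ a, w' (G.sigA a) = w' a)
    (r : (G.residual c w hc hw).A) :
    G.residualOfDiff c w hc hw w' ((G.residual c w hc hw).sigA r) =
      G.residualOfDiff c w hc hw w' r := by
  rcases r with b | b <;> simp [residualOfDiff, residual, hw, hw']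

theorem residualOfDiff_le_resCap {w' : G.A → ℚ} (hint : ∀ b, ∃ z : ℤ, w' b - w b = z)
    (hw'0 : ∀ b, 0 ≤ w' b) (hw'c : ∀ b, w' b ≤ c b) (r : (G.residual c w hc hw).A) :
    (G.residualOfDiff c w hc hw w' r : ℚ) ≤ G.resCap c w hc hw r := by
  rcases r with ⟨b, hb⟩ | ⟨b, hb⟩
  · change (⌊w' b - w b⌋₊ : ℚ) ≤ c b - w b
    rw [Rat.natCast_floor_eq_max (hint b)]
    exact max_le (by linarith [hw'c b]) (by linarith)
  · change (⌊w b - w' b⌋₊ : ℚ) ≤ w b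
    obtain ⟨z, hz⟩ := hint b
    rw [Rat.natCast_floor_eq_max ⟨-z, by push_cast; linarith⟩]
    exact max_le (by linarith [hw'0 b]) hb.le

theorem netOfResidual_residualOfDiff {w' : G.A → ℚ} (hint : ∀ b, ∃ z : ℤ, w' b - w b = z)
    (hw'0 : ∀ b, 0 ≤ w' b) (hw'c : ∀ b, w' b ≤ c b)
    (b : G.A) : G.netOfResidual c w hc hw (G.residualOfDiff c w hc hw w') b = w' b - w b := by
  obtain ⟨z, hz⟩ := hint b
  have e₁ : (⌊w' b - w b⌋₊ : ℚ) = max (w' b - w b) 0 := Rat.natCast_floor_eq_max ⟨z, hz⟩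
  have e₂ : (⌊w b - w' b⌋₊ : ℚ) = max (w b - w' b) 0 :=
    Rat.natCast_floor_eq_max ⟨-z, by push_cast; linarith⟩
  have := hw'0 b; have := hw'c b
  simp only [netOfResidual, residualOfDiff, Sum.elim_inl, Sum.elim_inr, dite_eq_ite, e₁, e₂]
  simp only [max_def]
  split_ifs <;> linarith

theorem symFlow_le_resCap (hint : ∀ b, ∃ z : ℤ, w b = z) {u v : N}
    {L : List (G.residual c w hc hw).A} (hL : G.IsRegularPath c w hc hw u v L)
    (r : (G.residual c w hc hw).A) :
    ((G.residual c w hc hw).symFlow L r : ℚ) ≤ G.resCap c w hc hw r := by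
  have := G.one_le_resCap hint r
  unfold symFlow
  split_ifs with h₁ h₂ h₂ <;> push_cast
  · linarith [(hL.2.2 r h₁ h₂).2]
  all_goals linarith

theorem isRegularPath_of_symFlow_le {u v : N} {L : List (G.residual c w hc hw).A}
    (hL : (G.residual c w hc hw).IsDiWalk u v L) (hnd : L.Nodup)
    (hle : ∀ r, ((G.residual c w hc hw).symFlow L r : ℚ) ≤ G.resCap c w hc hw r) :
    G.IsRegularPath c w hc hw u v L := by
  refine ⟨hL, hnd, fun r hr hσr => ⟨(G.resCap_sigA r).symm, ?_⟩⟩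
  have := hle r
  simp only [symFlow, if_pos hr, if_pos hσr] at this
  exact_mod_cast this

theorem exists_int_add_netOfResidual (hint : ∀ b, ∃ z : ℤ, w b = z)
    (A : (G.residual c w hc hw).A → ℕ) (b : G.A) :
    ∃ z : ℤ, w b + G.netOfResidual c w hc hw A b = z := by
  obtain ⟨z₁, h₁⟩ := hint b
  obtain ⟨z₂, h₂⟩ := G.exists_int_netOfResidual A b
  exact ⟨z₁ + z₂, by rw [h₁, h₂]; push_cast; rfl⟩

theorem div_add_netOfResidual (A : (G.residual c w hc hw).A → ℕ) (y : N) :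
    G.div (fun b => w b + G.netOfResidual c w hc hw A b) y
      = G.div w y + (G.residual c w hc hw).div (fun r => (A r : ℚ)) y := by
  rw [G.div_add, G.div_netOfResidual]

end Residual

variable {s : N} {c : G.A → ℕ} (hc : ∀ a, c (G.sigA a) = c a)

theorem div_eq_of_div_source_eq {f g : G.A → ℚ} (hf : G.IsISKFlow s f) (hg : G.IsISKFlow s g)
    (hval : G.div f s = G.div g s) (y : N) : G.div f y = G.div g y := by
  by_cases hys : y = s
  · rw [hys, hval]
  by_cases hyσs : y = G.sigV s
  · rw [hyσs, G.div_sigV_of_sigA_invariant hf.2.2.1, G.div_sigV_of_sigA_invariant hg.2.2.1, hval]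
  · rw [hf.2.2.2.1 y hys hyσs, hg.2.2.2.1 y hys hyσs]

theorem exists_augmentation_of_isRegularPath {f : G.A → ℚ} {hf : ∀ a, f (G.sigA a) = f a}
    (hf0 : ∀ b, 0 ≤ f b) (hfint : ∀ b, ∃ z : ℤ, f b = z) (hfc : G.FlowFeasible c f)
    {u v : N} {P : List (G.residual c f hc hf).A} (hP : G.IsRegularPath c f hc hf u v P) :
    ∃ f' : G.A → ℚ, (∀ b, f' b ∈ Set.Icc 0 (c b : ℚ)) ∧ (∀ b, ∃ z : ℤ, f' b = z) ∧
      (∀ b, f' (G.sigA b) = f' b) ∧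
      ∀ y, G.div f' y = G.div f y + (pathDiv u v y + pathDiv (G.sigV v) (G.sigV u) y) := by
  refine ⟨fun b => f b + G.netOfResidual c f hc hf ((G.residual c f hc hf).symFlow P) b,
    G.add_netOfResidual_mem_Icc (G.symFlow_le_resCap hfint hP) hf0 hfc,
    G.exists_int_add_netOfResidual hfint _,
    fun b => by simp only [hf, G.netOfResidual_sigA ((G.residual c f hc hf).symFlow_sigA P)],
    fun y => ?_⟩
  rw [G.div_add_netOfResidual, (G.residual c f hc hf).div_symFlow hP.1 hP.2.1]
  rfl

variable {g : G.A → ℚ} {hg : ∀ a, g (G.sigA a) = g a}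

theorem exists_isISKFlow_div_gt (hflow : G.IsISKFlow s g) (hfeas : G.FlowFeasible c g)
    {H : (G.residual c g hc hg).A → ℕ} (hHle : ∀ r, (H r : ℚ) ≤ G.resCap c g hc hg r)
    (hHsym : ∀ r, H ((G.residual c g hc hg).sigA r) = H r)
    (hHdiv : ∀ y, (G.residual c g hc hg).div (fun r => (H r : ℚ)) y = pathDiv s (G.sigV s) y) :
    ∃ g', G.IsISKFlow s g' ∧ G.FlowFeasible c g' ∧ G.div g s < G.div g' s := by
  obtain ⟨hg0, hgint, -, hgcons, hgs⟩ := hflow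
  have hdiv (y : N) : G.div (fun b => g b + G.netOfResidual c g hc hg H b) y
      = G.div g y + pathDiv s (G.sigV s) y := by
    rw [G.div_add_netOfResidual, hHdiv]
  have hs : pathDiv s (G.sigV s) s = 1 := by simp [pathDiv, G.sigV_ne s]
  have hIcc := G.add_netOfResidual_mem_Icc hHle hg0 hfeas
  refine ⟨_, ⟨fun b => (hIcc b).1, G.exists_int_add_netOfResidual hgint H,
    fun b => by simp only [hg, G.netOfResidual_sigA hHsym], fun y hys hyσs => ?_, ?_⟩,
    fun b => (hIcc b).2, ?_⟩
  · rw [hdiv, hgcons y hys hyσs]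
    simp [pathDiv, Ne.symm hys, Ne.symm hyσs]
  · rw [hdiv, hs]; linarith
  · rw [hdiv, hs]; linarith

theorem exists_isRegularPath_or_div_gt (hflow : G.IsISKFlow s g) (hfeas : G.FlowFeasible c g)
    {f' : G.A → ℚ} (hf'Icc : ∀ b, f' b ∈ Set.Icc 0 (c b : ℚ)) (hf'int : ∀ b, ∃ z : ℤ, f' b = z)
    (hf'sym : ∀ b, f' (G.sigA b) = f' b) {v : N} (hsv : s ≠ v)
    (hdiv : ∀ y, G.div f' y = G.div g y + (pathDiv s v y + pathDiv (G.sigV v) (G.sigV s) y)) :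
    (∃ L, G.IsRegularPath c g hc hg s v L) ∨
      ∃ g', G.IsISKFlow s g' ∧ G.FlowFeasible c g' ∧ G.div g s < G.div g' s := by
  have hint (b : G.A) : ∃ z : ℤ, f' b - g b = z := by
    obtain ⟨z₁, h₁⟩ := hf'int b
    obtain ⟨z₂, h₂⟩ := hflow.2.1 b
    exact ⟨z₁ - z₂, by rw [h₁, h₂]; push_cast; rfl⟩
  have hle := G.residualOfDiff_le_resCap (hc := hc) (hw := hg) hint (fun b => (hf'Icc b).1)
    (fun b => (hf'Icc b).2)
  have hdiv' (y : N) : (G.residual c g hc hg).div (fun r => (G.residualOfDiff c g hc hg f' r : ℚ)) y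
      = pathDiv s v y + pathDiv (G.sigV v) (G.sigV s) y := by
    rw [← G.div_netOfResidual, funext (G.netOfResidual_residualOfDiff hint (fun b => (hf'Icc b).1)
      (fun b => (hf'Icc b).2)), G.div_sub, hdiv]
    ring
  rcases (G.residual c g hc hg).exists_walk_or_symmetric_subflow _ (G.residualOfDiff_sigA hf'sym)
    hsv hdiv' with ⟨L, hL, hnd, hLle⟩ | ⟨H, hHle, hHsym, hHdiv⟩
  · exact Or.inl ⟨L, G.isRegularPath_of_symFlow_le hL hnd
      fun r => (Nat.cast_le.2 (hLle r)).trans (hle r)⟩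
  · exact Or.inr (G.exists_isISKFlow_div_gt hc hflow hfeas
      (fun r => (Nat.cast_le.2 (hHle r)).trans (hle r)) hHsym hHdiv)

theorem reachSet_subset_of_div_eq {f : G.A → ℚ} {hf : ∀ a, f (G.sigA a) = f a}
    (hflowf : G.IsISKFlow s f) (hfeasf : G.FlowFeasible c f)
    (hflowg : G.IsISKFlow s g) (hfeasg : G.FlowFeasible c g) (hval : G.div f s = G.div g s)
    (hmaxg : ∀ h : G.A → ℚ, G.IsISKFlow s h → G.FlowFeasible c h → G.div h s ≤ G.div g s) :
    G.reachSet s c hc f hf ⊆ G.reachSet s c hc g hg := by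
  rintro v (rfl | ⟨P, hP⟩)
  · exact Or.inl rfl
  by_cases hvs : v = s
  · exact Or.inl hvs
  obtain ⟨f', hf'Icc, hf'int, hf'sym, hf'div⟩ :=
    G.exists_augmentation_of_isRegularPath hc hflowf.1 hflowf.2.1 hfeasf hP
  rcases G.exists_isRegularPath_or_div_gt hc hflowg hfeasg hf'Icc hf'int hf'sym (Ne.symm hvs)
    (fun y => by rw [hf'div, G.div_eq_of_div_source_eq hflowf hflowg hval]) with
    ⟨L, hL⟩ | ⟨g', hg', hg'c, hlt⟩
  · exact Or.inr ⟨L, hL⟩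
  · exact absurd (hmaxg g' hg' hg'c) (not_le.2 hlt)

end SkewGraph

/-- the set of nodes reachable from `s` by `c_f`-regular paths
in the residual graph is the same for all maximum integer skew-symmetric
flows `f`. -/
theorem reachSet_independent_of_maximum_flow
    {N : Type} (G : SkewGraph N) (s : N) (c : G.A → ℕ)
    (hc : ∀ a, c (G.sigA a) = c a)
    (f g : G.A → ℚ)
    (hflowf : G.IsISKFlow s f) (hfeasf : G.FlowFeasible c f)
    (hsymf : ∀ a, f (G.sigA a) = f a)
    (hmaxf : ∀ h : G.A → ℚ, G.IsISKFlow s h → G.FlowFeasible c h →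
      G.div h s ≤ G.div f s)
    (hflowg : G.IsISKFlow s g) (hfeasg : G.FlowFeasible c g)
    (hsymg : ∀ a, g (G.sigA a) = g a)
    (hmaxg : ∀ h : G.A → ℚ, G.IsISKFlow s h → G.FlowFeasible c h →
      G.div h s ≤ G.div g s) :
    G.reachSet s c hc f hsymf = G.reachSet s c hc g hsymg := by
  have hval : G.div f s = G.div g s :=
    le_antisymm (hmaxg f hflowf hfeasf) (hmaxf g hflowg hfeasg)
  exact (G.reachSet_subset_of_div_eq hc hflowf hfeasf hflowg hfeasg hval hmaxg).antisymm
    (G.reachSet_subset_of_div_eq hc hflowg hfeasg hflowf hfeasf hval.symm hmaxf)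
end

section
/- Every bidirected graph Γ arises from a skew-symmetric graph G via a partition (V₁, V₂ = σ(V₁)) of V(G), and under the induced map τ every walk in G projects to a walk in Γ (consecutive images form transit pairs), with the symmetric walk σ(P) projecting to the reverse walk of τ(P); conversely, every walk in Γ lifts to a walk in G, uniquely up to swapping parallel symmetric arcs. -/
/-- The reverse of a step of a bidirected walk: the same edge traversed in
the opposite direction. -/
def BDGraph.Step.rev {N : Type} {Γ : BDGraph N} (s : Γ.Step) : Γ.Step :=
  ⟨s.e, !s.fwd⟩

/-!
Let the arcs of `G` be the steps of `Γ` (an edge with a direction of traversal) on two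
copies `V₁ ⊕ V₂` of the nodes: a step starts in the `V₁`-copy of its start node iff its edge
leaves that node, and ends in the `V₁`-copy of its end node iff its edge enters it; `σ`
reverses steps.
Then two steps are consecutive in `G` exactly when they meet at a node of `Γ` in a transit pair,
so the walks of `G` and of `Γ` are the same lists of steps and the projection is the identity.
-/

namespace BDGraph

variable {N : Type} {Γ : BDGraph N}

def nodeCopy (v : N) (b : Bool) : N ⊕ N := cond b (Sum.inl v) (Sum.inr v)

@[simp] lemma elim_nodeCopy (v : N) (b : Bool) : Sum.elim id id (nodeCopy v b) = v := by
  cases b <;> rfl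

@[simp] lemma isLeft_nodeCopy (v : N) (b : Bool) : (nodeCopy v b).isLeft = b := by
  cases b <;> rfl

@[simp] lemma swap_nodeCopy (v : N) (b : Bool) : (nodeCopy v b).swap = nodeCopy v (!b) := by
  cases b <;> rfl

lemma nodeCopy_inj {v w : N} {b c : Bool} : nodeCopy v b = nodeCopy w c ↔ v = w ∧ b = c := by
  cases b <;> cases c <;> simp [nodeCopy]

namespace Step

def equivProd : Γ.Step ≃ Γ.E × Bool where
  toFun s := (s.e, s.fwd)
  invFun p := ⟨p.1, p.2⟩
  left_inv _ := rfl
  right_inv _ := rfl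

instance : Fintype Γ.Step := Fintype.ofEquiv _ equivProd.symm

@[simp] lemma rev_rev (s : Γ.Step) : s.rev.rev = s := by
  simp [rev]

lemma rev_ne (s : Γ.Step) : s.rev ≠ s := by
  cases s; simp [rev]

@[simp] lemma src_rev (s : Γ.Step) : s.rev.src = s.dst := by
  cases s with | mk e b => cases b <;> rfl

@[simp] lemma dst_rev (s : Γ.Step) : s.rev.dst = s.src := by
  cases s with | mk e b => cases b <;> rfl

@[simp] lemma outSrc_rev (s : Γ.Step) : s.rev.outSrc = s.outDst := by
  cases s with | mk e b => cases b <;> rfl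

@[simp] lemma outDst_rev (s : Γ.Step) : s.rev.outDst = s.outSrc := by
  cases s with | mk e b => cases b <;> rfl

end Step

variable (Γ) in
abbrev toSkewGraph : SkewGraph (N ⊕ N) where
  A := Γ.Step
  fintypeA := inferInstance
  tail s := nodeCopy s.src s.outSrc
  head s := nodeCopy s.dst (!s.outDst)
  sigV := Sum.swap
  sigA := Step.rev
  sigV_invol := Sum.swap_swap
  sigV_ne := by rintro (v | v) <;> simp
  sigA_invol := Step.rev_rev
  tail_sigA s := by simp
  head_sigA s := by simp

@[simp] lemma elim_toSkewGraph_tail (s : Γ.Step) :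
    Sum.elim id id (Γ.toSkewGraph.tail s) = s.src :=
  elim_nodeCopy _ _

@[simp] lemma elim_toSkewGraph_head (s : Γ.Step) :
    Sum.elim id id (Γ.toSkewGraph.head s) = s.dst :=
  elim_nodeCopy _ _

lemma toSkewGraph_head_eq_tail_iff {s t : Γ.Step} :
    Γ.toSkewGraph.head s = Γ.toSkewGraph.tail t ↔ s.dst = t.src ∧ s.outDst ≠ t.outSrc := by
  simp [nodeCopy_inj, Bool.eq_not_iff]

theorem isBDWalk_iff_exists_isDiWalk {u v : N} {S : List Γ.Step} :
    Γ.IsBDWalk u v S ↔ ∃ x y : N ⊕ N, Sum.elim id id x = u ∧ Sum.elim id id y = v ∧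
      Γ.toSkewGraph.IsDiWalk x y S := by
  have hchain : S.IsChain (fun s t => s.dst = t.src ∧ s.outDst ≠ t.outSrc) ↔
      S.IsChain (fun s t => Γ.toSkewGraph.head s = Γ.toSkewGraph.tail t) :=
    List.IsChain.iff fun _ _ => toSkewGraph_head_eq_tail_iff.symm
  constructor
  · rintro ⟨hne, hsrc, hdst, hc⟩
    refine ⟨_, _, (elim_toSkewGraph_tail _).trans (hsrc _ (List.head?_eq_some_head hne)),
      (elim_toSkewGraph_head _).trans (hdst _ (List.getLast?_eq_some_getLast hne)), hne,
      ?_, ?_, hchain.mp hc⟩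
    · simp [List.head?_eq_some_head hne]
    · simp [List.getLast?_eq_some_getLast hne]
  · rintro ⟨x, y, rfl, rfl, hne, htail, hhead, hc⟩
    refine ⟨hne, fun s hs => ?_, fun s hs => ?_, hchain.mpr hc⟩
    · simp [← htail s hs]
    · simp [← hhead s hs]

end BDGraph

/-- every bidirected graph `Γ` arises from a skew-symmetric
graph `G` on the node set `N ⊕ N` (with `σ` swapping the two copies and the
partition `(V₁, V₂) = (inl '' N, inr '' N)`), via a two-to-one, `σ`-invariant
arc projection `τ` compatible with endpoints and directions.  Every walk of
`G` projects to a bidirected walk of `Γ`, the symmetric walk projecting to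
the reverse walk; conversely every bidirected walk of `Γ` lifts to a walk of
`G`, uniquely up to swapping parallel symmetric arcs. -/
theorem bidirected_graph_from_skew_symmetric_graph
    {N : Type} (Γ : BDGraph N) :
    ∃ (G : SkewGraph (N ⊕ N)) (τ : G.A → Γ.E) (stepProj : G.A → Γ.Step),
      -- `σ` swaps the two copies of `N`
      (∀ x : N, G.sigV (Sum.inl x) = Sum.inr x) ∧
      (∀ x : N, G.sigV (Sum.inr x) = Sum.inl x) ∧
      -- `τ` is `σ`-invariant and two-to-one
      (∀ a, τ (G.sigA a) = τ a) ∧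
      (∀ e : Γ.E, ∃ a, τ a = e ∧ ∀ b, τ b = e → b = a ∨ b = G.sigA a) ∧
      (∀ a, G.sigA a ≠ a) ∧
      -- endpoint/direction compatibility: an arc end at the tail lies in `V₁`
      -- iff the corresponding edge end leaves it; an arc end at the head lies
      -- in `V₁` iff the corresponding edge end enters it
      (∀ a, (Sum.elim id id (G.tail a) = Γ.endA (τ a) ∧
              Sum.elim id id (G.head a) = Γ.endB (τ a) ∧
              (G.tail a).isLeft = Γ.outA (τ a) ∧
              (G.head a).isLeft = !Γ.outB (τ a)) ∨
            (Sum.elim id id (G.tail a) = Γ.endB (τ a) ∧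
              Sum.elim id id (G.head a) = Γ.endA (τ a) ∧
              (G.tail a).isLeft = Γ.outB (τ a) ∧
              (G.head a).isLeft = !Γ.outA (τ a))) ∧
      -- `stepProj` realizes `τ`, and symmetric arcs project to reverse steps
      (∀ a, (stepProj a).e = τ a) ∧
      (∀ a, stepProj (G.sigA a) = (stepProj a).rev) ∧
      -- projection of walks: a walk of `G` projects to a bidirected walk
      (∀ (u v : N ⊕ N) (L : List G.A), G.IsDiWalk u v L →
        Γ.IsBDWalk (Sum.elim id id u) (Sum.elim id id v) (L.map stepProj)) ∧
      -- lifting of walks, with uniqueness up to swapping parallel symmetric arcs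
      (∀ (u v : N) (S : List Γ.Step), Γ.IsBDWalk u v S →
        ∃ (x y : N ⊕ N) (L : List G.A), Sum.elim id id x = u ∧
          Sum.elim id id y = v ∧ G.IsDiWalk x y L ∧ L.map stepProj = S) ∧
      (∀ (x y x' y' : N ⊕ N) (L L' : List G.A) (S : List Γ.Step),
        G.IsDiWalk x y L → G.IsDiWalk x' y' L' →
        L.map stepProj = S → L'.map stepProj = S →
        List.Forall₂ (fun a b => a = b ∨
          (b = G.sigA a ∧ G.tail a = G.tail b ∧ G.head a = G.head b)) L L') := by
  refine ⟨Γ.toSkewGraph, BDGraph.Step.e, id, fun _ => rfl, fun _ => rfl, fun _ => rfl,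
    fun e => ⟨⟨e, true⟩, rfl, ?_⟩, BDGraph.Step.rev_ne, ?_, fun _ => rfl, fun _ => rfl,
    fun u v L hL => ?_, fun u v S hS => ?_, ?_⟩
  · rintro ⟨_, _ | _⟩ rfl
    exacts [Or.inr rfl, Or.inl rfl]
  · rintro ⟨e, _ | _⟩ <;> simp [BDGraph.Step.src, BDGraph.Step.dst,
      BDGraph.Step.outSrc, BDGraph.Step.outDst]
  · rw [List.map_id]
    exact BDGraph.isBDWalk_iff_exists_isDiWalk.mpr ⟨u, v, rfl, rfl, hL⟩
  · obtain ⟨x, y, hx, hy, hS⟩ := BDGraph.isBDWalk_iff_exists_isDiWalk.mp hS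
    exact ⟨x, y, S, hx, hy, hS, List.map_id S⟩
  · rintro - - - - L L' S - - rfl hL'
    obtain rfl := List.map_injective_iff.mpr Function.injective_id hL'
    exact List.forall₂_same.mpr fun _ _ => Or.inl rfl
end

section
/- Let A be a nonnegative m×n rational matrix, b an integral m-vector, and k a positive integer. Suppose that for every nonnegative integral n-vector c for which the program max{y·b : y ∈ ℚ^m_{≥0}, yA ≤ c} has an optimal solution, it has an optimal solution with all coordinates in (1/k)ℤ. Then for every nonnegative integral n-vector c, the program min{c·x : x ∈ ℚ^n_{≥0}, Ax ≥ b}, whenever it has an optimal solution, has an optimal solution with all coordinates in (1/k)ℤ. -/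
open Finset

namespace EGPrf

lemma swap_sum {α β : Type} [Fintype α] [Fintype β] (w : α → ℚ) (v : α → β → ℚ) (f : β → ℚ) :
    ∑ i, (∑ ρ, w ρ * v ρ i) * f i = ∑ ρ, w ρ * ∑ i, v ρ i * f i := by
  simp_rw [Finset.sum_mul, Finset.mul_sum, mul_assoc]
  exact Finset.sum_comm

def Sat {ι : Type} [Fintype ι] {n : ℕ} (A : ι → Fin n → ℚ) (b : ι → ℚ) (x : Fin n → ℚ) : Prop :=
  ∀ i, b i ≤ ∑ j, A i j * x j

theorem elim : ∀ (n : ℕ) (ι : Type) [Fintype ι] [DecidableEq ι] (A : ι → Fin n → ℚ),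
    ∃ (N : ℕ) (u : Fin N → ι → ℚ),
      (∀ r i, 0 ≤ u r i) ∧
      (∀ r j, ∑ i, u r i * A i j = 0) ∧
      (∀ b : ι → ℚ, (∀ r, ∑ i, u r i * b i ≤ 0) → ∃ x, Sat A b x) := by
  intro n
  induction n with
  | zero =>
    intro ι _ _ A
    refine ⟨Fintype.card ι, fun r i => if i = (Fintype.equivFin ι).symm r then 1 else 0,
      ?_, ?_, ?_⟩
    · intro r i; dsimp only; split <;> norm_num
    · intro r j; exact j.elim0
    · intro b hb
      refine ⟨fun j => j.elim0, fun i => ?_⟩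
      have := hb ((Fintype.equivFin ι) i)
      simp only [ite_mul, one_mul, zero_mul, Finset.sum_ite_eq', Finset.mem_univ, if_true,
        Equiv.symm_apply_apply] at this
      simpa using this
  | succ n IH =>
    intro ι _ _ A
    set h : ι → ℚ := fun i => A i 0 with hh
    set T : ι → Fin n → ℚ := fun i j => A i j.succ with hT
    set B : ({p : ι × ι // 0 < h p.1 ∧ h p.2 < 0} ⊕ {i : ι // h i = 0}) → Fin n → ℚ :=
      Sum.elim (fun p j => (-h p.1.2) * T p.1.1 j + h p.1.1 * T p.1.2 j) (fun q => T q.1) with hB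
    set v : ({p : ι × ι // 0 < h p.1 ∧ h p.2 < 0} ⊕ {i : ι // h i = 0}) → ι → ℚ :=
      Sum.elim
        (fun p i => (-h p.1.2) * (if i = p.1.1 then 1 else 0)
            + h p.1.1 * (if i = p.1.2 then 1 else 0))
        (fun q i => if i = q.1 then 1 else 0) with hv
    have sumvl : ∀ p (f : ι → ℚ), (∑ i, v (Sum.inl p) i * f i)
        = (-h p.1.2) * f p.1.1 + h p.1.1 * f p.1.2 := by
      intro p f
      simp only [hv, Sum.elim_inl, add_mul, mul_assoc, ite_mul, one_mul, zero_mul,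
        Finset.sum_add_distrib, ← Finset.mul_sum, Finset.sum_ite_eq', Finset.mem_univ, if_true]
    have sumvr : ∀ q (f : ι → ℚ), (∑ i, v (Sum.inr q) i * f i) = f q.1 := by
      intro q f
      simp only [hv, Sum.elim_inr, ite_mul, one_mul, zero_mul,
        Finset.sum_ite_eq', Finset.mem_univ, if_true]
    have hv0 : ∀ ρ i, 0 ≤ v ρ i := by
      rintro (p | q) i
      · have h1 := p.2.1
        have h2 := p.2.2
        simp only [hv, Sum.elim_inl]
        have hn : (0:ℚ) ≤ -h p.1.2 := by linarith
        have : (0:ℚ) ≤ (if i = p.1.1 then (1:ℚ) else 0) := by split <;> norm_num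
        have : (0:ℚ) ≤ (if i = p.1.2 then (1:ℚ) else 0) := by split <;> norm_num
        positivity
      · simp only [hv, Sum.elim_inr]; split <;> norm_num
    obtain ⟨N, w, hw0, hwB, hwtr⟩ := IH _ B
    refine ⟨N, fun r i => ∑ ρ, w r ρ * v ρ i, ?_, ?_, ?_⟩
    · intro r i
      exact Finset.sum_nonneg fun ρ _ => mul_nonneg (hw0 r ρ) (hv0 ρ i)
    · intro r j
      rw [swap_sum]
      refine Fin.cases ?_ ?_ j
      · have hz : ∀ ρ, (∑ i, v ρ i * A i 0) = 0 := by
          rintro (p | q)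
          · rw [sumvl]
            have h1 := p.2.1
            have h2 := p.2.2
            show -h p.1.2 * h p.1.1 + h p.1.1 * h p.1.2 = 0
            ring
          · rw [sumvr]; exact q.2
        simp [hz]
      · intro j'
        have hs : ∀ ρ, (∑ i, v ρ i * A i j'.succ) = B ρ j' := by
          rintro (p | q)
          · rw [sumvl]; rfl
          · rw [sumvr]; rfl
        simp_rw [hs]
        exact hwB r j'
    · intro b hb
      have hb' : ∀ r, (∑ ρ, w r ρ * (∑ i, v ρ i * b i)) ≤ 0 := by
        intro r
        rw [← swap_sum]
        exact hb r
      obtain ⟨x', hx'⟩ := hwtr _ hb'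
      set g : ι → ℚ := fun i => b i - ∑ j, T i j * x' j with hg
      have hzero : ∀ i, h i = 0 → g i ≤ 0 := by
        intro i hi
        have hk := hx' (Sum.inr ⟨i, hi⟩)
        dsimp only at hk
        rw [sumvr] at hk
        have hk2 : b i ≤ ∑ j, T i j * x' j := hk
        simp only [hg]
        linarith
      have hpair : ∀ i i', 0 < h i → h i' < 0 → g i / h i ≤ g i' / h i' := by
        intro i i' hi hi'
        have key := hx' (Sum.inl ⟨(i, i'), hi, hi'⟩)
        dsimp only at key
        rw [sumvl] at key
        have key2 : (-h i') * b i + h i * b i'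
            ≤ ∑ j, ((-h i') * T i j + h i * T i' j) * x' j := key
        have expand : (∑ j, ((-h i') * T i j + h i * T i' j) * x' j)
            = (-h i') * (∑ j, T i j * x' j) + h i * (∑ j, T i' j * x' j) := by
          simp_rw [add_mul, Finset.sum_add_distrib, mul_assoc, ← Finset.mul_sum]
        rw [expand] at key2
        have hnum : (-h i') * g i + h i * g i' ≤ 0 := by
          simp only [hg]; ring_nf; ring_nf at key2; linarith
        have h2 : (0:ℚ) < -h i' := by linarith
        rw [show g i' / h i' = -g i' / -h i' from (neg_div_neg_eq _ _).symm,
          div_le_div_iff₀ hi h2]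
        nlinarith [hnum]
      classical
      set Pos : Finset ι := Finset.univ.filter (fun i => 0 < h i) with hPos
      set Neg : Finset ι := Finset.univ.filter (fun i => h i < 0) with hNeg
      set x₀ : ℚ := if hP : Pos.Nonempty then Pos.sup' hP (fun i => g i / h i)
        else if hN : Neg.Nonempty then Neg.inf' hN (fun i => g i / h i) else 0 with hx₀
      have hlow : ∀ i, 0 < h i → g i / h i ≤ x₀ := by
        intro i hi
        have hmem : i ∈ Pos := by rw [hPos]; exact Finset.mem_filter.mpr ⟨Finset.mem_univ _, hi⟩
        have hP : Pos.Nonempty := ⟨i, hmem⟩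
        rw [hx₀, dif_pos hP]
        exact Finset.le_sup' (fun i => g i / h i) hmem
      have hup : ∀ i, h i < 0 → x₀ ≤ g i / h i := by
        intro i hi
        by_cases hP : Pos.Nonempty
        · rw [hx₀, dif_pos hP]
          refine Finset.sup'_le _ _ fun i' hi' => ?_
          rw [hPos] at hi'
          exact hpair i' i (Finset.mem_filter.mp hi').2 hi
        · have hmem : i ∈ Neg := by rw [hNeg]; exact Finset.mem_filter.mpr ⟨Finset.mem_univ _, hi⟩
          have hN : Neg.Nonempty := ⟨i, hmem⟩
          rw [hx₀, dif_neg hP, dif_pos hN]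
          exact Finset.inf'_le (fun i => g i / h i) hmem
      refine ⟨Fin.cons x₀ x', fun i => ?_⟩
      rw [Fin.sum_univ_succ]
      simp only [Fin.cons_zero, Fin.cons_succ]
      have goal2 : g i ≤ h i * x₀ := by
        rcases lt_trichotomy (h i) 0 with hlt | heq0 | hgt
        · have := (le_div_iff_of_neg hlt).mp (hup i hlt)
          linarith
        · have := hzero i heq0
          rw [heq0]; linarith
        · have := (div_le_iff₀ hgt).mp (hlow i hgt)
          linarith
      simp only [hg, hh, hT] at goal2
      linarith


lemma comb_le {ι : Type} [Fintype ι] {n : ℕ} {A : ι → Fin n → ℚ} {b : ι → ℚ} {x : Fin n → ℚ}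
    (hx : Sat A b x) (y : ι → ℚ) (hy : ∀ i, 0 ≤ y i) :
    ∑ i, y i * b i ≤ ∑ j, (∑ i, y i * A i j) * x j := by
  rw [swap_sum]
  exact Finset.sum_le_sum fun i _ => mul_le_mul_of_nonneg_left (hx i) (hy i)

theorem farkas {ι : Type} [Fintype ι] [DecidableEq ι] {n : ℕ} (A : ι → Fin n → ℚ) (b : ι → ℚ)
    (hinf : ¬ ∃ x, Sat A b x) :
    ∃ y : ι → ℚ, (∀ i, 0 ≤ y i) ∧ (∀ j, ∑ i, y i * A i j = 0) ∧ 0 < ∑ i, y i * b i := by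
  obtain ⟨N, u, hu0, huA, hutr⟩ := elim n ι A
  have : ¬ ∀ r, ∑ i, u r i * b i ≤ 0 := fun hr => hinf (hutr b hr)
  push_neg at this
  obtain ⟨r, hr⟩ := this
  exact ⟨u r, hu0 r, huA r, hr⟩

theorem affine_farkas {ι : Type} [Fintype ι] [DecidableEq ι] {n : ℕ}
    (A : ι → Fin n → ℚ) (b : ι → ℚ) (c : Fin n → ℚ) (δ : ℚ)
    (hfeas : ∃ x, Sat A b x) (hbd : ∀ x, Sat A b x → δ ≤ ∑ j, c j * x j) :
    ∃ y : ι → ℚ, (∀ i, 0 ≤ y i) ∧ (∀ j, ∑ i, y i * A i j = c j) ∧ δ ≤ ∑ i, y i * b i := by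
  classical
  set A' : (ι ⊕ Fin 2) → Fin (n+1) → ℚ :=
    Sum.elim (fun i => Fin.cons (-b i) (A i))
      ![Fin.cons 1 (fun _ => 0), Fin.cons δ (fun j => -c j)] with hA'
  set b' : (ι ⊕ Fin 2) → ℚ := Sum.elim (fun _ => 0) ![0, 1] with hb'
  by_cases hf : ∃ z, Sat A' b' z
  · exfalso
    obtain ⟨z, hz⟩ := hf
    set t : ℚ := z 0 with ht
    set x : Fin n → ℚ := fun j => z j.succ with hx
    have hrow : ∀ i, 0 ≤ -b i * t + ∑ j, A i j * x j := by
      intro i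
      have := hz (Sum.inl i)
      simpa [hA', hb', Fin.sum_univ_succ, Fin.cons_zero, Fin.cons_succ] using this
    have htpos : 0 ≤ t := by
      have := hz (Sum.inr 0)
      simpa [hA', hb', Fin.sum_univ_succ, Fin.cons_zero, Fin.cons_succ] using this
    have hlast : 1 ≤ δ * t - ∑ j, c j * x j := by
      have := hz (Sum.inr 1)
      have h2 : (0:ℚ)+1 ≤ δ * t + ∑ j, -c j * x j := by
        simpa [hA', hb', Fin.sum_univ_succ, Fin.cons_zero, Fin.cons_succ] using this
      have h3 : (∑ j, -c j * x j) = -∑ j, c j * x j := by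
        simp [neg_mul, Finset.sum_neg_distrib]
      rw [h3] at h2; linarith
    rcases eq_or_lt_of_le htpos with hteq | htlt
    · -- t = 0
      obtain ⟨x₀, hx₀⟩ := hfeas
      set s : ℚ := max 0 ((∑ j, c j * x₀ j) - δ + 1) with hs
      have hs0 : 0 ≤ s := le_max_left _ _
      have hs1 : (∑ j, c j * x₀ j) - δ + 1 ≤ s := le_max_right _ _
      have hAx : ∀ i, 0 ≤ ∑ j, A i j * x j := by
        intro i; have := hrow i; rw [← hteq] at this; linarith
      have hcx : (∑ j, c j * x j) ≤ -1 := by rw [← hteq] at hlast; linarith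
      have hsat : Sat A b (fun j => x₀ j + s * x j) := by
        intro i
        have e : (∑ j, A i j * (x₀ j + s * x j))
            = (∑ j, A i j * x₀ j) + s * ∑ j, A i j * x j := by
          simp_rw [mul_add, Finset.sum_add_distrib, Finset.mul_sum]
          congr 1
          exact Finset.sum_congr rfl fun j _ => by ring
        rw [e]
        have := hx₀ i
        nlinarith [hAx i]
      have hval := hbd _ hsat
      have e2 : (∑ j, c j * (x₀ j + s * x j))
          = (∑ j, c j * x₀ j) + s * ∑ j, c j * x j := by
        simp_rw [mul_add, Finset.sum_add_distrib, Finset.mul_sum]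
        congr 1
        exact Finset.sum_congr rfl fun j _ => by ring
      rw [e2] at hval
      nlinarith
    · -- t > 0
      set x₁ : Fin n → ℚ := fun j => x j / t with hx₁
      have hsat : Sat A b x₁ := by
        intro i
        have e : (∑ j, A i j * (x j / t)) = (∑ j, A i j * x j) / t := by
          rw [Finset.sum_div]; simp_rw [mul_div_assoc]
        rw [hx₁]
        simp only
        rw [e, le_div_iff₀ htlt]
        have := hrow i
        nlinarith
      have hval := hbd _ hsat
      have e2 : (∑ j, c j * (x j / t)) = (∑ j, c j * x j) / t := by
        rw [Finset.sum_div]; simp_rw [mul_div_assoc]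
      rw [hx₁] at hval
      simp only at hval
      rw [e2] at hval
      rw [le_div_iff₀ htlt] at hval
      nlinarith
  · obtain ⟨w, hw0, hwA, hwb⟩ := farkas A' b' hf
    have hsumb : (∑ i, w i * b' i) = w (Sum.inr 1) := by
      rw [Fintype.sum_sum_type, Fin.sum_univ_two]
      simp [hb']
    rw [hsumb] at hwb
    refine ⟨fun i => w (Sum.inl i) / w (Sum.inr 1),
      fun i => div_nonneg (hw0 _) hwb.le, ?_, ?_⟩
    · intro j
      have hcol := hwA j.succ
      rw [Fintype.sum_sum_type, Fin.sum_univ_two] at hcol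
      simp only [hA', Sum.elim_inl, Sum.elim_inr, Fin.cons_succ, Matrix.cons_val_zero,
        Matrix.cons_val_one, Matrix.head_cons] at hcol
      have hsum : (∑ i, w (Sum.inl i) * A i j) = w (Sum.inr 1) * c j := by linarith
      simp_rw [div_mul_eq_mul_div]
      rw [← Finset.sum_div, hsum]
      exact mul_div_cancel_left₀ _ hwb.ne'
    · have hcol := hwA 0
      rw [Fintype.sum_sum_type, Fin.sum_univ_two] at hcol
      simp only [hA', Sum.elim_inl, Sum.elim_inr, Fin.cons_zero, Matrix.cons_val_zero,
        Matrix.cons_val_one, Matrix.head_cons] at hcol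
      have hb0 : 0 ≤ w (Sum.inr 0) := hw0 _
      have hneg : (∑ i, w (Sum.inl i) * -b i) = -∑ i, w (Sum.inl i) * b i := by
        simp [mul_neg]
      rw [hneg] at hcol
      have hsum : w (Sum.inr 1) * δ ≤ ∑ i, w (Sum.inl i) * b i := by linarith
      have e : (∑ i, w (Sum.inl i) / w (Sum.inr 1) * b i)
          = (∑ i, w (Sum.inl i) * b i) / w (Sum.inr 1) := by
        rw [Finset.sum_div]; exact Finset.sum_congr rfl fun i _ => by ring
      rw [e, le_div_iff₀ hwb]
      nlinarith

theorem attain {ι : Type} [Fintype ι] [DecidableEq ι] {n : ℕ}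
    (A : ι → Fin n → ℚ) (b : ι → ℚ) (c : Fin n → ℚ) (δ₀ : ℚ)
    (hfeas : ∃ x, Sat A b x) (hbd : ∀ x, Sat A b x → δ₀ ≤ ∑ j, c j * x j) :
    ∃ x, Sat A b x ∧ ∀ x', Sat A b x' → ∑ j, c j * x j ≤ ∑ j, c j * x' j := by
  classical
  set A' : (ι ⊕ Unit) → Fin n → ℚ := Sum.elim A (fun _ j => -c j) with hA'
  obtain ⟨N, u, hu0, huA, hutr⟩ := elim n (ι ⊕ Unit) A'
  set α : Fin N → ℚ := fun r => u r (Sum.inr ()) with hα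
  set β : Fin N → ℚ := fun r => ∑ i, u r (Sum.inl i) * b i with hβ
  have hsplit : ∀ (r : Fin N) (t : ℚ),
      (∑ i, u r i * Sum.elim b (fun _ => -t) i) = β r - α r * t := by
    intro r t
    rw [Fintype.sum_sum_type]
    simp [hα, hβ, mul_neg, sub_eq_add_neg]
  have fwd : ∀ x, Sat A b x → ∀ r, β r ≤ α r * (∑ j, c j * x j) := by
    intro x hx r
    have h1 : (∑ i, u r i * Sum.elim b (fun _ => -(∑ j, c j * x j)) i)
        ≤ ∑ i, u r i * (∑ j, A' i j * x j) := by
      refine Finset.sum_le_sum fun i _ => mul_le_mul_of_nonneg_left ?_ (hu0 r i)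
      rcases i with i | i
      · exact hx i
      · simp only [Sum.elim_inr, hA']
        rw [show (∑ j, -c j * x j) = -∑ j, c j * x j by simp [neg_mul]]
    have h2 : (∑ i, u r i * (∑ j, A' i j * x j)) = 0 := by
      rw [← swap_sum]
      simp_rw [huA r]
      simp
    rw [hsplit] at h1
    rw [h2] at h1
    linarith
  have bwd : ∀ t : ℚ, (∀ r, β r ≤ α r * t) →
      ∃ x, Sat A b x ∧ (∑ j, c j * x j) ≤ t := by
    intro t ht
    obtain ⟨x, hx⟩ := hutr (Sum.elim b (fun _ => -t)) (by
      intro r; rw [hsplit]; have := ht r; linarith)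
    refine ⟨x, fun i => hx (Sum.inl i), ?_⟩
    have := hx (Sum.inr ())
    simp only [Sum.elim_inr, hA'] at this
    rw [show (∑ j, -c j * x j) = -∑ j, c j * x j by simp [neg_mul]] at this
    linarith
  obtain ⟨x₀, hx₀⟩ := hfeas
  have ht₀ := fwd x₀ hx₀
  have hα0 : ∀ r, 0 ≤ α r := fun r => hu0 r _
  have hne : ¬ ∀ r, β r ≤ α r * (δ₀ - 1) := by
    intro hr
    obtain ⟨x, hx, hxle⟩ := bwd _ hr
    have := hbd x hx
    linarith
  push_neg at hne
  obtain ⟨r₀, hr₀⟩ := hne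
  set R : Finset (Fin N) := Finset.univ.filter (fun r => 0 < α r) with hR
  have hr₀R : r₀ ∈ R := by
    rw [hR]
    refine Finset.mem_filter.mpr ⟨Finset.mem_univ _, ?_⟩
    rcases eq_or_lt_of_le (hα0 r₀) with h | h
    · exfalso
      have h1 := ht₀ r₀
      rw [← h] at h1 hr₀
      simp at h1 hr₀
      linarith
    · exact h
  have hRne : R.Nonempty := ⟨r₀, hr₀R⟩
  set tstar : ℚ := R.sup' hRne (fun r => β r / α r) with htstar
  have hstar : ∀ r, β r ≤ α r * tstar := by
    intro r
    by_cases hrR : r ∈ R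
    · have hpos : 0 < α r := by
        rw [hR] at hrR
        exact (Finset.mem_filter.mp hrR).2
      have := Finset.le_sup' (fun r => β r / α r) hrR
      rw [← htstar] at this
      rw [div_le_iff₀ hpos] at this
      linarith
    · have hz : α r = 0 := by
        rcases eq_or_lt_of_le (hα0 r) with h | h
        · exact h.symm
        · exact absurd (by rw [hR]; exact Finset.mem_filter.mpr ⟨Finset.mem_univ _, h⟩) hrR
      have h1 := ht₀ r
      rw [hz] at h1 ⊢
      simpa using h1
  obtain ⟨xs, hxs, hxsle⟩ := bwd tstar hstar
  refine ⟨xs, hxs, fun x' hx' => ?_⟩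
  obtain ⟨r₁, hr₁R, hr₁⟩ := Finset.exists_mem_eq_sup' hRne (fun r => β r / α r)
  have hpos : 0 < α r₁ := by
    rw [hR] at hr₁R
    exact (Finset.mem_filter.mp hr₁R).2
  have h1 := fwd x' hx' r₁
  have h2 : tstar ≤ ∑ j, c j * x' j := by
    rw [htstar, hr₁, div_le_iff₀ hpos]
    linarith
  linarith


section Main
variable {m n : ℕ} (A : Matrix (Fin m) (Fin n) ℚ) (b : Fin m → ℤ)

/-- row system of the primal: `Ax ≥ b`, `x ≥ 0`. -/
def Ar : (Fin m ⊕ Fin n) → Fin n → ℚ :=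
  Sum.elim (fun i j => A i j) (fun j' j => if j = j' then 1 else 0)

def br : (Fin m ⊕ Fin n) → ℚ := Sum.elim (fun i => (b i : ℚ)) (fun _ => 0)

lemma unit_sum (x : Fin n → ℚ) (j' : Fin n) :
    (∑ j, (if j = j' then (1:ℚ) else 0) * x j) = x j' := by
  simp [ite_mul]

lemma sat_iff (x : Fin n → ℚ) :
    Sat (Ar A) (br b) x ↔ (∀ j, 0 ≤ x j) ∧ (∀ i, (b i : ℚ) ≤ Matrix.mulVec A x i) := by
  constructor
  · intro hx
    constructor
    · intro j
      have := hx (Sum.inr j)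
      simpa [Ar, br, unit_sum] using this
    · intro i
      have := hx (Sum.inl i)
      simpa [Ar, br, Matrix.mulVec, dotProduct] using this
  · rintro ⟨h0, h1⟩ (i | j)
    · simpa [Ar, br, Matrix.mulVec, dotProduct] using h1 i
    · simpa [Ar, br, unit_sum] using h0 j

/-- optimality for cost `c'` -/
def Opt (c' : Fin n → ℕ) (x : Fin n → ℚ) : Prop :=
  Sat (Ar A) (br b) x ∧
    ∀ x', Sat (Ar A) (br b) x' → (∑ j, (c' j : ℚ) * x j) ≤ ∑ j, (c' j : ℚ) * x' j

lemma weak_duality (c' : Fin n → ℕ) (y : Fin m → ℚ) (hy0 : ∀ i, 0 ≤ y i)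
    (hyA : ∀ j, Matrix.vecMul y A j ≤ (c' j : ℚ)) (x : Fin n → ℚ)
    (hx : Sat (Ar A) (br b) x) :
    (∑ i, y i * (b i : ℚ)) ≤ ∑ j, (c' j : ℚ) * x j := by
  have h1 : (∑ i, y i * (b i : ℚ)) ≤ ∑ i, y i * ∑ j, A i j * x j :=
    Finset.sum_le_sum fun i _ => mul_le_mul_of_nonneg_left (by
      have := hx (Sum.inl i); simpa [Ar, br] using this) (hy0 i)
  have h2 : (∑ i, y i * ∑ j, A i j * x j) = ∑ j, (∑ i, y i * A i j) * x j :=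
    (swap_sum y (fun i j => A i j) x).symm
  have h3 : (∑ j, (∑ i, y i * A i j) * x j) ≤ ∑ j, (c' j : ℚ) * x j := by
    refine Finset.sum_le_sum fun j _ => mul_le_mul_of_nonneg_right ?_ ?_
    · have := hyA j
      simpa [Matrix.vecMul, dotProduct] using this
    · have := hx (Sum.inr j)
      simpa [Ar, br, unit_sum] using this
  linarith


variable (k : ℕ)

lemma value_lemma
    (hdual : ∀ c : Fin n → ℕ,
      (∃ y : Fin m → ℚ, (∀ i, 0 ≤ y i) ∧
          (∀ j, Matrix.vecMul y A j ≤ (c j : ℚ)) ∧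
          (∀ y' : Fin m → ℚ, (∀ i, 0 ≤ y' i) →
            (∀ j, Matrix.vecMul y' A j ≤ (c j : ℚ)) →
            (∑ i, y' i * (b i : ℚ)) ≤ ∑ i, y i * (b i : ℚ))) →
      ∃ y : Fin m → ℚ, (∀ i, 0 ≤ y i) ∧
        (∀ j, Matrix.vecMul y A j ≤ (c j : ℚ)) ∧
        (∀ y' : Fin m → ℚ, (∀ i, 0 ≤ y' i) →
          (∀ j, Matrix.vecMul y' A j ≤ (c j : ℚ)) →
          (∑ i, y' i * (b i : ℚ)) ≤ ∑ i, y i * (b i : ℚ)) ∧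
        ∀ i, ∃ z : ℤ, y i = (z : ℚ) / (k : ℚ))
    (c' : Fin n → ℕ) (x₀ : Fin n → ℚ) (hopt : Opt A b c' x₀) :
    ∃ z : ℤ, (∑ j, (c' j : ℚ) * x₀ j) = (z : ℚ) / (k : ℚ) := by
  classical
  set δ : ℚ := ∑ j, (c' j : ℚ) * x₀ j with hδ
  obtain ⟨w, hw0, hwA, hwb⟩ := affine_farkas (Ar A) (br b) (fun j => (c' j : ℚ)) δ
    ⟨x₀, hopt.1⟩ (fun x hx => hopt.2 x hx)
  set y : Fin m → ℚ := fun i => w (Sum.inl i) with hy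
  have hyA : ∀ j, Matrix.vecMul y A j ≤ (c' j : ℚ) := by
    intro j
    have hcol := hwA j
    rw [Fintype.sum_sum_type] at hcol
    simp only [Ar, Sum.elim_inl, Sum.elim_inr] at hcol
    have h2 : (∑ j', w (Sum.inr j') * if j = j' then (1:ℚ) else 0) = w (Sum.inr j) := by
      simp [mul_ite]
    rw [h2] at hcol
    have hvm : Matrix.vecMul y A j = ∑ i, y i * A i j := by
      simp [Matrix.vecMul, dotProduct]
    rw [hvm]
    have := hw0 (Sum.inr j)
    linarith
  have hyb : δ ≤ ∑ i, y i * (b i : ℚ) := by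
    have : (∑ r, w r * br b r) = ∑ i, y i * (b i : ℚ) := by
      rw [Fintype.sum_sum_type]
      simp [br, hy]
    rw [this] at hwb
    exact hwb
  have hyopt : ∀ y' : Fin m → ℚ, (∀ i, 0 ≤ y' i) →
      (∀ j, Matrix.vecMul y' A j ≤ (c' j : ℚ)) →
      (∑ i, y' i * (b i : ℚ)) ≤ ∑ i, y i * (b i : ℚ) := by
    intro y' hy'0 hy'A
    have := weak_duality A b c' y' hy'0 hy'A x₀ hopt.1
    linarith
  have hy0 : ∀ i, 0 ≤ y i := fun i => hw0 (Sum.inl i)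
  obtain ⟨yh, hyh0, hyhA, hyhopt, hyhint⟩ := hdual c' ⟨y, hy0, hyA, hyopt⟩
  have hval : (∑ i, yh i * (b i : ℚ)) = δ := by
    have h1 := weak_duality A b c' yh hyh0 hyhA x₀ hopt.1
    have h2 := hyhopt y hy0 hyA
    rw [← hδ] at h1
    linarith
  choose zf hzf using hyhint
  refine ⟨∑ i, zf i * b i, ?_⟩
  rw [← hval]
  push_cast
  rw [Finset.sum_div]
  exact Finset.sum_congr rfl fun i _ => by rw [hzf i]; ring


lemma step (hdual : ∀ c' : Fin n → ℕ, ∀ x₀ : Fin n → ℚ, Opt A b c' x₀ →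
      ∃ z : ℤ, (∑ j, (c' j : ℚ) * x₀ j) = (z : ℚ) / (k : ℚ))
    (c' : Fin n → ℕ) (x₁ : Fin n → ℚ) (hopt₁ : Opt A b c' x₁) (j : Fin n) :
    ∃ c'' : Fin n → ℕ, (∃ x, Opt A b c'' x) ∧
      (∀ x, Opt A b c'' x → Opt A b c' x) ∧
      (∀ x, Opt A b c'' x → ∃ z : ℤ, x j = (z:ℚ)/(k:ℚ)) := by
  classical
  set δ' : ℚ := ∑ j', (c' j' : ℚ) * x₁ j' with hδ'
  set AF : ((Fin m ⊕ Fin n) ⊕ Unit) → Fin n → ℚ :=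
    Sum.elim (Ar A) (fun _ j' => -(c' j' : ℚ)) with hAF
  set bF : ((Fin m ⊕ Fin n) ⊕ Unit) → ℚ := Sum.elim (br b) (fun _ => -δ') with hbF
  have negsum : ∀ x : Fin n → ℚ, (∑ j', -(c' j' : ℚ) * x j') = -∑ j', (c' j':ℚ) * x j' := by
    intro x; simp [neg_mul]
  have satF : ∀ x, Sat AF bF x ↔
      (Sat (Ar A) (br b) x ∧ (∑ j', (c' j' : ℚ) * x j') ≤ δ') := by
    intro x
    constructor
    · intro hx
      refine ⟨fun r => by simpa [hAF, hbF] using hx (Sum.inl r), ?_⟩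
      have h1 := hx (Sum.inr ())
      simp only [hAF, hbF, Sum.elim_inr] at h1
      rw [negsum] at h1
      linarith
    · rintro ⟨h1, h2⟩ (r | u)
      · simpa [hAF, hbF] using h1 r
      · simp only [hAF, hbF, Sum.elim_inr]
        rw [negsum]
        linarith
  set ej : Fin n → ℚ := fun j' => if j' = j then 1 else 0 with hej
  have ejsum : ∀ x : Fin n → ℚ, (∑ j', ej j' * x j') = x j := by
    intro x; simp [hej, ite_mul]
  have hFfeas : ∃ x, Sat AF bF x := ⟨x₁, (satF x₁).2 ⟨hopt₁.1, le_of_eq hδ'.symm⟩⟩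
  have hFbd : ∀ x, Sat AF bF x → (0:ℚ) ≤ ∑ j', ej j' * x j' := by
    intro x hx
    rw [ejsum]
    have := ((satF x).1 hx).1 (Sum.inr j)
    simpa [Ar, br, unit_sum] using this
  obtain ⟨xh, hxhF, hxhmin⟩ := attain AF bF ej 0 hFfeas hFbd
  set μ : ℚ := xh j with hμ
  have hμbd : ∀ x, Sat AF bF x → μ ≤ ∑ j', ej j' * x j' := by
    intro x hx
    have h1 := hxhmin x hx
    rw [ejsum] at h1
    rw [hμ]
    exact h1
  obtain ⟨w, hw0, hwA, hwb⟩ := affine_farkas AF bF ej μ hFfeas hμbd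
  set lam : ℚ := w (Sum.inr ()) with hlam
  have hkey : ∀ x, Sat (Ar A) (br b) x →
      μ - lam * ((∑ j', (c' j':ℚ) * x j') - δ') ≤ x j := by
    intro x hx
    have hcol : ∀ j', (∑ ρ, w (Sum.inl ρ) * Ar A ρ j') = ej j' + lam * (c' j' : ℚ) := by
      intro j'
      have h1 := hwA j'
      rw [Fintype.sum_sum_type] at h1
      simp only [hAF, Sum.elim_inl, Sum.elim_inr, Fintype.sum_unique] at h1
      rw [← hlam] at h1
      linarith
    have h1 : (∑ ρ, w (Sum.inl ρ) * br b ρ)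
        ≤ ∑ j', (ej j' + lam * (c' j':ℚ)) * x j' := by
      have s1 : (∑ ρ, w (Sum.inl ρ) * br b ρ)
          ≤ ∑ ρ, w (Sum.inl ρ) * ∑ j', Ar A ρ j' * x j' :=
        Finset.sum_le_sum fun ρ _ => mul_le_mul_of_nonneg_left (hx ρ) (hw0 (Sum.inl ρ))
      have s2 : (∑ ρ, w (Sum.inl ρ) * ∑ j', Ar A ρ j' * x j')
          = ∑ j', (∑ ρ, w (Sum.inl ρ) * Ar A ρ j') * x j' :=
        (swap_sum (fun ρ => w (Sum.inl ρ)) (fun ρ j' => Ar A ρ j') x).symm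
      have s3 : (∑ j', (∑ ρ, w (Sum.inl ρ) * Ar A ρ j') * x j')
          = ∑ j', (ej j' + lam * (c' j':ℚ)) * x j' :=
        Finset.sum_congr rfl fun j' _ => by rw [hcol j']
      linarith [s1, s2.symm ▸ s1]
    have h2 : (∑ j', (ej j' + lam*(c' j':ℚ)) * x j')
        = x j + lam * ∑ j', (c' j':ℚ) * x j' := by
      simp_rw [add_mul, Finset.sum_add_distrib]
      rw [ejsum]
      congr 1
      rw [Finset.mul_sum]
      exact Finset.sum_congr rfl fun _ _ => by ring
    have h3 : μ ≤ (∑ ρ, w (Sum.inl ρ) * br b ρ) - lam * δ' := by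
      have e1 : (∑ r, w r * bF r) = (∑ ρ, w (Sum.inl ρ) * br b ρ) + lam * (-δ') := by
        rw [Fintype.sum_sum_type]
        simp [hbF, hlam]
      rw [e1] at hwb
      linarith
    rw [h2] at h1
    linarith
  have hlam0 : 0 ≤ lam := hw0 (Sum.inr ())
  set M : ℕ := ⌈lam⌉₊ with hMdef
  have hMle : lam ≤ (M:ℚ) := Nat.le_ceil lam
  set c'' : Fin n → ℕ := fun j' => (M+1) * c' j' + (if j' = j then 1 else 0) with hc''
  have ccast : ∀ x : Fin n → ℚ,
      (∑ j', (c'' j' : ℚ) * x j') = ((M:ℚ)+1) * (∑ j', (c' j':ℚ) * x j') + x j := by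
    intro x
    have e1 : ∀ j', (c'' j' : ℚ) * x j'
        = ((M:ℚ)+1) * ((c' j':ℚ) * x j') + ej j' * x j' := by
      intro j'
      by_cases h : j' = j <;> simp only [hc'', hej, h, if_true, if_false] <;> push_cast <;> ring
    rw [Finset.sum_congr rfl (fun j' _ => e1 j'), Finset.sum_add_distrib, ← Finset.mul_sum,
      ejsum]
  have hlow : ∀ x, Sat (Ar A) (br b) x →
      (∑ j', (c' j':ℚ) * x j') - δ'
        ≤ (∑ j', (c'' j':ℚ) * x j') - (((M:ℚ)+1) * δ' + μ) := by
    intro x hx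
    have h0 : δ' ≤ ∑ j', (c' j':ℚ) * x j' := hopt₁.2 x hx
    have h1 := hkey x hx
    have h2 := ccast x
    nlinarith [mul_le_mul_of_nonneg_right hMle (sub_nonneg.mpr h0)]
  have hxhsat : Sat (Ar A) (br b) xh := ((satF xh).1 hxhF).1
  have hxhc' : (∑ j', (c' j':ℚ) * xh j') = δ' := by
    have hle := ((satF xh).1 hxhF).2
    have hge := hopt₁.2 xh hxhsat
    linarith
  have hxhval : (∑ j', (c'' j':ℚ) * xh j') = ((M:ℚ)+1) * δ' + μ := by
    rw [ccast, hxhc', hμ]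
  have hopt'' : Opt A b c'' xh := by
    refine ⟨hxhsat, fun x hx => ?_⟩
    have h1 := hlow x hx
    have h0 : δ' ≤ ∑ j', (c' j':ℚ) * x j' := hopt₁.2 x hx
    rw [hxhval]
    linarith
  have hfacts : ∀ x, Opt A b c'' x → (∑ j', (c' j':ℚ) * x j') = δ' ∧ x j = μ := by
    intro x hx
    have hle : (∑ j', (c'' j':ℚ) * x j') ≤ ((M:ℚ)+1) * δ' + μ := by
      have h1 := hx.2 xh hxhsat
      rw [hxhval] at h1
      exact h1
    have h0 : δ' ≤ ∑ j', (c' j':ℚ) * x j' := hopt₁.2 x hx.1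
    have h1 := hlow x hx.1
    have heq : (∑ j', (c' j':ℚ) * x j') = δ' := by linarith
    have h2 := ccast x
    have hxj : x j ≤ μ := by rw [heq] at h2; linarith
    have hxj2 : μ ≤ x j := by
      have hsF : Sat AF bF x := (satF x).2 ⟨hx.1, le_of_eq heq⟩
      have h3 := hμbd x hsF
      rw [ejsum] at h3
      exact h3
    exact ⟨heq, le_antisymm hxj hxj2⟩
  refine ⟨c'', ⟨xh, hopt''⟩, ?_, ?_⟩
  · intro x hx
    have heq := (hfacts x hx).1
    exact ⟨hx.1, fun x' hx' => by rw [heq]; exact hopt₁.2 x' hx'⟩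
  · intro x hx
    obtain ⟨z₁, hz₁⟩ := hdual c'' xh hopt''
    obtain ⟨z₂, hz₂⟩ := hdual c' x₁ hopt₁
    refine ⟨z₁ - (M+1) * z₂, ?_⟩
    have hδval : δ' = (z₂:ℚ)/(k:ℚ) := by rw [hδ']; exact hz₂
    have hμval : μ = (z₁:ℚ)/(k:ℚ) - ((M:ℚ)+1) * ((z₂:ℚ)/(k:ℚ)) := by
      rw [hz₁] at hxhval
      rw [hδval] at hxhval
      linarith
    rw [(hfacts x hx).2, hμval]
    push_cast
    ring

lemma main_list
    (hvl : ∀ (c' : Fin n → ℕ) (x₀ : Fin n → ℚ), Opt A b c' x₀ →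
      ∃ z : ℤ, (∑ j, (c' j : ℚ) * x₀ j) = (z : ℚ) / (k : ℚ))
    (c : Fin n → ℕ) (hne : ∃ x, Opt A b c x) :
    ∀ L : List (Fin n), ∃ c' : Fin n → ℕ, (∃ x, Opt A b c' x) ∧
      (∀ x, Opt A b c' x → Opt A b c x) ∧
      (∀ j ∈ L, ∀ x, Opt A b c' x → ∃ z : ℤ, x j = (z:ℚ)/(k:ℚ)) := by
  intro L
  induction L with
  | nil => exact ⟨c, hne, fun x h => h, by simp⟩
  | cons j L ih =>
    obtain ⟨c', hne', hsub', hint'⟩ := ih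
    obtain ⟨x₁, hx₁⟩ := hne'
    obtain ⟨c'', hne'', hsub'', hint''⟩ := step A b k hvl c' x₁ hx₁ j
    refine ⟨c'', hne'', fun x hx => hsub' x (hsub'' x hx), ?_⟩
    intro j' hj' x hx
    rcases List.mem_cons.mp hj' with h | h
    · subst h; exact hint'' x hx
    · exact hint' j' h x (hsub'' x hx)

end Main


end EGPrf

/-- Edmonds–Giles type principle: let `A` be a nonnegative
`m×n` rational matrix, `b` an integral `m`-vector and `k` a positive integer.
If for every nonnegative integral `c` the program
`max {y·b : y ≥ 0, yA ≤ c}` has a `1/k`-integral optimal solution whenever it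
has an optimal solution, then for every nonnegative integral `c` the program
`min {c·x : x ≥ 0, Ax ≥ b}` has a `1/k`-integral optimal solution whenever it
has an optimal solution. -/
theorem dual_k_integrality_implies_primal_k_integrality
    {m n : ℕ} (A : Matrix (Fin m) (Fin n) ℚ) (hA : ∀ i j, 0 ≤ A i j)
    (b : Fin m → ℤ) (k : ℕ) (hk : 0 < k)
    (hdual : ∀ c : Fin n → ℕ,
      (∃ y : Fin m → ℚ, (∀ i, 0 ≤ y i) ∧
          (∀ j, Matrix.vecMul y A j ≤ (c j : ℚ)) ∧
          (∀ y' : Fin m → ℚ, (∀ i, 0 ≤ y' i) →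
            (∀ j, Matrix.vecMul y' A j ≤ (c j : ℚ)) →
            (∑ i, y' i * (b i : ℚ)) ≤ ∑ i, y i * (b i : ℚ))) →
      ∃ y : Fin m → ℚ, (∀ i, 0 ≤ y i) ∧
        (∀ j, Matrix.vecMul y A j ≤ (c j : ℚ)) ∧
        (∀ y' : Fin m → ℚ, (∀ i, 0 ≤ y' i) →
          (∀ j, Matrix.vecMul y' A j ≤ (c j : ℚ)) →
          (∑ i, y' i * (b i : ℚ)) ≤ ∑ i, y i * (b i : ℚ)) ∧
        ∀ i, ∃ z : ℤ, y i = (z : ℚ) / (k : ℚ)) :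
    ∀ c : Fin n → ℕ,
      (∃ x : Fin n → ℚ, (∀ j, 0 ≤ x j) ∧
          (∀ i, (b i : ℚ) ≤ Matrix.mulVec A x i) ∧
          (∀ x' : Fin n → ℚ, (∀ j, 0 ≤ x' j) →
            (∀ i, (b i : ℚ) ≤ Matrix.mulVec A x' i) →
            (∑ j, (c j : ℚ) * x j) ≤ ∑ j, (c j : ℚ) * x' j)) →
      ∃ x : Fin n → ℚ, (∀ j, 0 ≤ x j) ∧
        (∀ i, (b i : ℚ) ≤ Matrix.mulVec A x i) ∧
        (∀ x' : Fin n → ℚ, (∀ j, 0 ≤ x' j) →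
          (∀ i, (b i : ℚ) ≤ Matrix.mulVec A x' i) →
          (∑ j, (c j : ℚ) * x j) ≤ ∑ j, (c j : ℚ) * x' j) ∧
        ∀ j, ∃ z : ℤ, x j = (z : ℚ) / (k : ℚ) := by
  intro c hc
  classical
  obtain ⟨x, hx0, hxA, hxmin⟩ := hc
  have hOptc : EGPrf.Opt A b c x := by
    refine ⟨(EGPrf.sat_iff A b x).mpr ⟨hx0, hxA⟩, fun x' hx' => ?_⟩
    obtain ⟨h0', hA'⟩ := (EGPrf.sat_iff A b x').mp hx'
    exact hxmin x' h0' hA'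
  have hvl : ∀ (c' : Fin n → ℕ) (x₀ : Fin n → ℚ), EGPrf.Opt A b c' x₀ →
      ∃ z : ℤ, (∑ j, (c' j : ℚ) * x₀ j) = (z : ℚ) / (k : ℚ) :=
    fun c' x₀ h => EGPrf.value_lemma A b k hdual c' x₀ h
  obtain ⟨c', hne', hsub', hint'⟩ :=
    EGPrf.main_list A b k hvl c ⟨x, hOptc⟩ (List.finRange n)
  obtain ⟨xb, hxb⟩ := hne'
  have hOpt := hsub' xb hxb
  obtain ⟨hb0, hbA⟩ := (EGPrf.sat_iff A b xb).mp hOpt.1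
  refine ⟨xb, hb0, hbA, fun x' h0' hA' => ?_, fun j => ?_⟩
  · exact hOpt.2 x' ((EGPrf.sat_iff A b x').mpr ⟨h0', hA'⟩)
  · exact hint' j (List.mem_finRange j) xb hxb
end

section
/- Suppose l is an optimal dual solution with ℓ = ā + l̄, and F an optimal primal multiflow for the parametric problem with λ = p (the minimum ℓ-distance between distinct terminals). For any node v ∈ V(G) with l(v) > 0, the corresponding capacity-inheriting edge e_v of the auxiliary bidirected graph H is saturated by the bidirected flow generated by F: f(e_v) = c(e_v). -/
/-! Restricted to vectors, the multiflow problem is the linear program `max b ⬝ᵥ x` subject to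
`A *ᵥ x ≤ c`, `x ≥ 0`, where `A` is the node–path incidence matrix and `b P = λ - a(P)`; `l` is an
optimal solution of its dual. Farkas' lemma (by Fourier–Motzkin elimination) puts `c` in the cone
spanned by the columns of the paths that are tight for `l` and the unit vectors of the nodes with
`l = 0`. Reading off the coefficients gives a primal solution of value `l ⬝ᵥ c`, so the weak duality
chain `b ⬝ᵥ F ≤ l ⬝ᵥ (A *ᵥ F) ≤ l ⬝ᵥ c` is tight and `(A *ᵥ F) v = c v` wherever `l v > 0`. As
`χ P (e_v)` is the incidence of `v` on `P`, `f (e_v)` is the node load of `F` at `v`. -/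

open SimpleGraph

/-- The type of `T`-paths of `G`. -/
structure TPath {V : Type} (G : SimpleGraph V) (T : Set V) where
  s : V
  t : V
  walk : G.Walk s t
  prop : IsTPath G T walk

/-- The value of a multiflow: the total weight of all its paths. -/
noncomputable def mfVal {V : Type} {G : SimpleGraph V} {T : Set V}
    (F : TPath G T →₀ ℚ) : ℚ :=
  F.sum fun _ w => w

open Classical in
/-- The node load of a multiflow at `v`: total weight of the paths through `v`. -/
noncomputable def mfLoad {V : Type} {G : SimpleGraph V} {T : Set V}
    (F : TPath G T →₀ ℚ) (v : V) : ℚ :=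
  F.sum fun P w => if v ∈ P.walk.support then w else 0

/-- The cost of a multiflow with respect to node costs `a`. -/
noncomputable def mfCost {V : Type} {G : SimpleGraph V} {T : Set V}
    (a : V → ℚ) (F : TPath G T →₀ ℚ) : ℚ :=
  F.sum fun P w => w * (P.walk.support.map a).sum

/-- Feasibility: nonnegative weights whose load at each node is at most `c`. -/
def MFFeasible {V : Type} {G : SimpleGraph V} {T : Set V}
    (c : V → ℕ) (F : TPath G T →₀ ℚ) : Prop :=
  (∀ P, 0 ≤ F P) ∧ ∀ v, mfLoad F v ≤ (c v : ℚ)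

open Matrix

section Farkas
variable {n K : Type*} [Fintype n] [Field K] [LinearOrder K] [IsStrictOrderedRing K]

theorem PointedCone.mem_hull_of_forall_dotProduct_nonneg (s : Finset (n → K)) (c : n → K)
    (h : ∀ d : n → K, (∀ g ∈ s, 0 ≤ g ⬝ᵥ d) → 0 ≤ c ⬝ᵥ d) :
    c ∈ PointedCone.hull K (s : Set (n → K)) := by
  classical
  induction hN : s.card using Nat.strong_induction_on generalizing s c with
  | _ N ih =>
  subst hN
  rcases s.eq_empty_or_nonempty with rfl | ⟨g, hg⟩
  · have hc : 0 ≤ c ⬝ᵥ -c := h (-c) (by simp)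
    rw [dotProduct_neg, neg_nonneg] at hc
    have hc0 : c = 0 :=
      dotProduct_self_eq_zero.1 (le_antisymm hc (Finset.sum_nonneg fun i _ => mul_self_nonneg _))
    exact hc0 ▸ zero_mem _
  have hlt : (s.erase g).card < s.card := Finset.card_erase_lt_of_mem hg
  by_cases hc : ∀ d, (∀ g' ∈ s.erase g, 0 ≤ g' ⬝ᵥ d) → 0 ≤ c ⬝ᵥ d
  · exact Submodule.span_mono (Finset.coe_subset.2 (Finset.erase_subset g s))
      (ih _ hlt _ c hc rfl)
  push Not at hc
  obtain ⟨d₀, hd₀, hcd₀⟩ := hc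
  have hgd₀ : g ⬝ᵥ d₀ < 0 := by
    by_contra! hgd₀
    refine hcd₀.not_ge (h d₀ fun g' hg' => ?_)
    by_cases hgg' : g' = g
    · exact hgg' ▸ hgd₀
    · exact hd₀ g' (Finset.mem_erase.2 ⟨hgg', hg'⟩)
  -- Fourier–Motzkin step: project along `g` onto the hyperplane `⬝ᵥ d₀ = 0`.
  set q := g ⬝ᵥ d₀
  let π : (n → K) → (n → K) := fun x => x - (x ⬝ᵥ d₀ / q) • g
  have hπ : ∀ x d, π x ⬝ᵥ d = x ⬝ᵥ (d - (g ⬝ᵥ d / q) • d₀) := fun x d => by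
    simp only [π, sub_dotProduct, dotProduct_sub, smul_dotProduct, dotProduct_smul, smul_eq_mul]
    ring
  have hπc : π c ∈ PointedCone.hull K ((s.erase g).image π : Set (n → K)) := by
    refine ih _ (Finset.card_image_le.trans_lt hlt) _ _ (fun d hd => ?_) rfl
    rw [hπ]
    refine h _ fun g' hg' => ?_
    by_cases hgg' : g' = g
    · subst hgg'
      rw [dotProduct_sub, dotProduct_smul, smul_eq_mul, div_mul_cancel₀ _ hgd₀.ne, sub_self]
    · rw [← hπ]
      exact hd _ (Finset.mem_image_of_mem π (Finset.mem_erase.2 ⟨hgg', hg'⟩))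
  have hg_mem : g ∈ PointedCone.hull K (s : Set (n → K)) := PointedCone.subset_hull hg
  have hπs : PointedCone.hull K ((s.erase g).image π : Set (n → K)) ≤
      PointedCone.hull K (s : Set (n → K)) := by
    refine Submodule.span_le.2 fun x hx => ?_
    obtain ⟨g', hg', rfl⟩ := Finset.mem_image.1 (Finset.mem_coe.1 hx)
    have hcoef : 0 ≤ -(g' ⬝ᵥ d₀ / q) :=
      neg_nonneg.2 (div_nonpos_of_nonneg_of_nonpos (hd₀ g' hg') hgd₀.le)
    have := add_mem (PointedCone.subset_hull (R := K) (Finset.mem_of_mem_erase hg'))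
      (PointedCone.smul_mem _ hcoef hg_mem)
    simpa [π, sub_eq_add_neg] using this
  have hcπ : c = π c + (c ⬝ᵥ d₀ / q) • g := by simp [π]
  rw [hcπ]
  exact add_mem (hπs hπc) (PointedCone.smul_mem _ (div_nonneg_of_nonpos hcd₀.le hgd₀.le) hg_mem)

end Farkas

section LinearProgramming
variable {K : Type*} [Field K] [LinearOrder K] [IsStrictOrderedRing K]

lemma exists_pos_forall_nonneg_add_mul {u w : K} (hu : 0 ≤ u) (hw : u = 0 → 0 ≤ w) :
    ∃ ε : K, 0 < ε ∧ ∀ t, 0 ≤ t → t ≤ ε → 0 ≤ u + t * w := by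
  rcases le_or_gt 0 w with hw₀ | hw₀
  · exact ⟨1, one_pos, fun t ht _ => add_nonneg hu (mul_nonneg ht hw₀)⟩
  have hu₀ : 0 < u := hu.lt_of_ne' fun h => (hw h).not_gt hw₀
  refine ⟨u / -w, div_pos hu₀ (neg_pos.2 hw₀), fun t _ ht => ?_⟩
  have := mul_le_mul_of_nonneg_right ht (neg_nonneg.2 hw₀.le)
  rw [div_mul_cancel₀ _ (neg_ne_zero.2 hw₀.ne)] at this
  linarith

lemma exists_pos_nonneg_add_smul {ι : Type*} [Finite ι] {u w : ι → K} (hu : 0 ≤ u)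
    (hw : ∀ i, u i = 0 → 0 ≤ w i) : ∃ ε : K, 0 < ε ∧ 0 ≤ u + ε • w := by
  choose ε hε hεu using fun i => exists_pos_forall_nonneg_add_mul (hu i) (hw i)
  cases isEmpty_or_nonempty ι
  · exact ⟨1, one_pos, fun i => isEmptyElim i⟩
  obtain ⟨i₀, hi₀⟩ := Finite.exists_min ε
  exact ⟨ε i₀, hε i₀, fun i => hεu i _ (hε i₀).le (hi₀ i)⟩

variable {m n : Type*} [Fintype m] [Fintype n]

namespace Matrix

theorem exists_primal_eq_of_dual_optimal (A : Matrix m n K) (b : n → K) (c y : m → K)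
    (hy : 0 ≤ y) (hyb : b ≤ Aᵀ *ᵥ y)
    (hyopt : ∀ y', 0 ≤ y' → b ≤ Aᵀ *ᵥ y' → c ⬝ᵥ y ≤ c ⬝ᵥ y') :
    ∃ x, 0 ≤ x ∧ A *ᵥ x ≤ c ∧ b ⬝ᵥ x = y ⬝ᵥ c := by
  classical
  let S : Finset (m → K) := ({j | b j = (Aᵀ *ᵥ y) j} : Finset n).image A.col ∪
    ({i | y i = 0} : Finset m).image fun i => Pi.single i 1
  have hcS : c ∈ PointedCone.hull K (S : Set (m → K)) := by
    refine PointedCone.mem_hull_of_forall_dotProduct_nonneg S c fun d hd => ?_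
    have hAd : ∀ j, b j = (Aᵀ *ᵥ y) j → 0 ≤ (Aᵀ *ᵥ d) j := fun j hj =>
      hd _ (Finset.mem_union_left _ (Finset.mem_image_of_mem _ (by simpa using hj)))
    have hd₀ : ∀ i, y i = 0 → 0 ≤ d i := fun i hi => by
      simpa using hd _ (Finset.mem_union_right _ (Finset.mem_image_of_mem _ (by simpa using hi)))
    -- Moving `y` a little along `d` keeps it dual feasible, so optimality gives `0 ≤ c ⬝ᵥ d`.
    obtain ⟨ε, hε, hεy⟩ := exists_pos_nonneg_add_smul (u := Sum.elim y (Aᵀ *ᵥ y - b))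
      (w := Sum.elim d (Aᵀ *ᵥ d))
      (fun k => k.rec (fun i => hy i) fun j => sub_nonneg.2 (hyb j))
      (fun k => k.rec hd₀ fun j hj => hAd j (sub_eq_zero.1 hj).symm)
    have hfeas := hyopt (y + ε • d) (fun i => hεy (Sum.inl i)) fun j => by
      have := hεy (Sum.inr j)
      simp only [Pi.zero_apply, Pi.add_apply, Pi.smul_apply, Sum.elim_inr, Pi.sub_apply,
        smul_eq_mul] at this
      simp only [mulVec_add, mulVec_smul, Pi.add_apply, Pi.smul_apply, smul_eq_mul]
      linarith
    rw [dotProduct_add, dotProduct_smul, smul_eq_mul] at hfeas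
    exact le_of_mul_le_mul_left (by simpa using hfeas) hε
  -- Every vector `z` of that cone dominates some `A *ᵥ x`, `x ≥ 0`, with `b ⬝ᵥ x = y ⬝ᵥ z`.
  obtain ⟨x, hx, hAx, hbx⟩ : ∃ x, 0 ≤ x ∧ A *ᵥ x ≤ c ∧ b ⬝ᵥ x = y ⬝ᵥ c := by
    refine Submodule.span_induction (p := fun z _ => ∃ x, 0 ≤ x ∧ A *ᵥ x ≤ z ∧ b ⬝ᵥ x = y ⬝ᵥ z)
      (fun z hz => ?_) ⟨0, le_rfl, by simp, by simp⟩ ?_ ?_ hcS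
    · rcases Finset.mem_union.1 (Finset.mem_coe.1 hz) with hz | hz
      · obtain ⟨j, hj, rfl⟩ := Finset.mem_image.1 hz
        refine ⟨Pi.single j 1, Pi.single_nonneg.2 zero_le_one, (mulVec_single_one A j).le, ?_⟩
        rw [dotProduct_single_one, (Finset.mem_filter.1 hj).2, dotProduct_comm]
        rfl
      · obtain ⟨i, hi, rfl⟩ := Finset.mem_image.1 hz
        exact ⟨0, le_rfl, by simp [Pi.single_nonneg],
          by simp [dotProduct_single, (Finset.mem_filter.1 hi).2]⟩
    · rintro z z' - - ⟨x, hx, hAx, hbx⟩ ⟨x', hx', hAx', hbx'⟩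
      exact ⟨x + x', add_nonneg hx hx', by simpa [mulVec_add] using add_le_add hAx hAx',
        by simp [dotProduct_add, hbx, hbx']⟩
    · rintro ⟨t, ht⟩ z - ⟨x, hx, hAx, hbx⟩
      refine ⟨t • x, smul_nonneg ht hx, ?_, ?_⟩
      · simpa [mulVec_smul] using smul_le_smul_of_nonneg_left hAx ht
      · simp [Nonneg.mk_smul, dotProduct_smul, hbx]
  exact ⟨x, hx, hAx, hbx⟩

theorem mulVec_apply_eq_of_primal_dual_optimal (A : Matrix m n K) (b : n → K) (c : m → K)
    {x : n → K} (hx : 0 ≤ x) (hAx : A *ᵥ x ≤ c)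
    (hxopt : ∀ x', 0 ≤ x' → A *ᵥ x' ≤ c → b ⬝ᵥ x' ≤ b ⬝ᵥ x)
    {y : m → K} (hy : 0 ≤ y) (hyb : b ≤ Aᵀ *ᵥ y)
    (hyopt : ∀ y', 0 ≤ y' → b ≤ Aᵀ *ᵥ y' → c ⬝ᵥ y ≤ c ⬝ᵥ y') {i : m} (hi : 0 < y i) :
    (A *ᵥ x) i = c i := by
  obtain ⟨x', hx', hAx', hbx'⟩ := exists_primal_eq_of_dual_optimal A b c y hy hyb hyopt
  have hslack : y ⬝ᵥ (c - A *ᵥ x) ≤ 0 := by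
    have := calc y ⬝ᵥ c = b ⬝ᵥ x' := hbx'.symm
      _ ≤ b ⬝ᵥ x := hxopt x' hx' hAx'
      _ ≤ (Aᵀ *ᵥ y) ⬝ᵥ x := dotProduct_le_dotProduct_of_nonneg_right hyb hx
      _ = y ⬝ᵥ (A *ᵥ x) := by rw [mulVec_transpose, dotProduct_mulVec]
    rw [dotProduct_sub]
    linarith
  have hterm := (Finset.sum_eq_zero_iff_of_nonneg fun j _ => mul_nonneg (hy j)
    (sub_nonneg.2 (hAx j))).1 (le_antisymm hslack
      (dotProduct_nonneg_of_nonneg hy (sub_nonneg.2 hAx))) i (Finset.mem_univ i)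
  simpa [hi.ne', sub_eq_zero, eq_comm] using hterm

end Matrix

end LinearProgramming

section Multiflow
variable {V : Type} {G : SimpleGraph V} {T : Set V}

instance [Finite V] : Finite (TPath G T) := by
  classical
  have := Fintype.ofFinite V
  refine Finite.of_injective (β := Σ s t : V, G.Path s t)
    (fun P => ⟨P.s, P.t, P.walk, P.prop.2.2.2.1⟩) ?_
  rintro ⟨s, t, p, hp⟩ ⟨s', t', p', hp'⟩ h
  simp only [Sigma.mk.injEq] at h
  obtain ⟨rfl, h⟩ := h
  simp only [heq_eq_eq, Sigma.mk.injEq] at h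
  obtain ⟨rfl, h⟩ := h
  cases heq_iff_eq.1 h
  rfl

variable (G T) in
open Classical in
noncomputable def tpathIncidence : Matrix V (TPath G T) ℚ :=
  Matrix.of fun v P => if v ∈ P.walk.support then 1 else 0

lemma transpose_tpathIncidence_mulVec [Fintype V] (l : V → ℚ) (P : TPath G T) :
    ((tpathIncidence G T)ᵀ *ᵥ l) P = (P.walk.support.map l).sum := by
  classical
  rw [← List.sum_toFinset _ P.prop.2.2.2.1.support_nodup]
  simp only [mulVec, dotProduct, tpathIncidence, transpose_apply, of_apply, ite_mul, one_mul,
    zero_mul]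
  rw [← Finset.sum_filter]
  congr 1
  ext v
  simp

lemma le_transpose_tpathIncidence_mulVec_iff [Fintype V] (b : TPath G T → ℚ) (l : V → ℚ) :
    b ≤ (tpathIncidence G T)ᵀ *ᵥ l ↔ ∀ P : TPath G T, (P.walk.support.map l).sum ≥ b P := by
  simp only [Pi.le_def, transpose_tpathIncidence_mulVec, ge_iff_le]

variable [Fintype (TPath G T)]

lemma mfLoad_eq_mulVec (F : TPath G T →₀ ℚ) (v : V) :
    mfLoad F v = (tpathIncidence G T *ᵥ ⇑F) v := by
  classical
  rw [mfLoad, Finsupp.sum_fintype _ _ (by simp)]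
  simp [mulVec, dotProduct, tpathIncidence]

lemma objective_eq_dotProduct (lam : ℚ) (a : V → ℚ) (F : TPath G T →₀ ℚ) :
    lam * mfVal F - mfCost a F = (fun P => lam - (P.walk.support.map a).sum) ⬝ᵥ ⇑F := by
  rw [mfVal, mfCost, Finsupp.sum_fintype _ _ (by simp), Finsupp.sum_fintype _ _ (by simp),
    Finset.mul_sum, ← Finset.sum_sub_distrib]
  simp only [dotProduct]
  exact Finset.sum_congr rfl fun P _ => by ring

lemma mfFeasible_iff (c : V → ℕ) (F : TPath G T →₀ ℚ) :
    MFFeasible c F ↔ 0 ≤ ⇑F ∧ tpathIncidence G T *ᵥ ⇑F ≤ fun v => (c v : ℚ) := by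
  simp only [MFFeasible, mfLoad_eq_mulVec]
  rfl

end Multiflow

open Classical in
/-- `ι` is the edge type of `H`, `eAssign v = e_v`, `χ P` is the incidence vector of the
`q`–`q` path corresponding to `P`, and the generated flow is `f(e) = Σ_P F(P)·χ_P(e)`. -/
theorem locked_edges_saturated_by_generated_flow
    {V : Type} [Fintype V] [DecidableEq V]
    (G : SimpleGraph V) (T : Set V) (c : V → ℕ) (a : V → ℕ) (lam : ℕ)
    (F : TPath G T →₀ ℚ) (hF : MFFeasible c F)
    (hFopt : ∀ F' : TPath G T →₀ ℚ, MFFeasible c F' →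
      (lam : ℚ) * mfVal F' - mfCost (fun v => (a v : ℚ)) F'
        ≤ (lam : ℚ) * mfVal F - mfCost (fun v => (a v : ℚ)) F)
    (l : V → ℚ) (hl : ∀ v, 0 ≤ l v)
    (hlfeas : ∀ P : TPath G T, (P.walk.support.map l).sum
      ≥ (lam : ℚ) - (P.walk.support.map fun v => (a v : ℚ)).sum)
    (hlopt : ∀ l' : V → ℚ, (∀ v, 0 ≤ l' v) →
      (∀ P : TPath G T, (P.walk.support.map l').sum
        ≥ (lam : ℚ) - (P.walk.support.map fun v => (a v : ℚ)).sum) →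
      ∑ v : V, (c v : ℚ) * l v ≤ ∑ v : V, (c v : ℚ) * l' v)
    {ι : Type} (eAssign : V → ι) (cE : ι → ℕ)
    (hcap : ∀ v, cE (eAssign v) = c v)
    (χ : TPath G T → ι → ℚ)
    (hχ : ∀ P : TPath G T, F P ≠ 0 → ∀ v : V,
      χ P (eAssign v) = if v ∈ P.walk.support then 1 else 0)
    (f : ι → ℚ) (hf : f = fun e => F.sum fun P w => w * χ P e) :
    ∀ v : V, 0 < l v → f (eAssign v) = (cE (eAssign v) : ℚ) := by
  have := Fintype.ofFinite (TPath G T)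
  intro v hv
  have hload : mfLoad F v = c v := by
    rw [mfLoad_eq_mulVec]
    refine (tpathIncidence G T).mulVec_apply_eq_of_primal_dual_optimal
      (fun P => (lam : ℚ) - (P.walk.support.map fun v => (a v : ℚ)).sum) _
      ((mfFeasible_iff c F).1 hF).1 ((mfFeasible_iff c F).1 hF).2 (fun x hx hAx => ?_) hl
      ((le_transpose_tpathIncidence_mulVec_iff _ l).2 hlfeas)
      (fun l' hl' hl'feas => hlopt l' hl' ((le_transpose_tpathIncidence_mulVec_iff _ l').1 hl'feas))
      hv
    simpa only [objective_eq_dotProduct, Finsupp.coe_equivFunOnFinite_symm] using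
      hFopt (Finsupp.equivFunOnFinite.symm x) ((mfFeasible_iff c _).2 ⟨hx, hAx⟩)
  rw [hf, hcap, ← hload, mfLoad]
  refine Finsupp.sum_congr fun P hP => ?_
  rw [hχ P (Finsupp.mem_support_iff.1 hP)]
  by_cases hvP : v ∈ P.walk.support <;> simp [hvP]
end
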